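/- arXiv:1511.00113 — 5 statements merged into one kernel-verified Lean document; each statement's English description precedes it below -/
import Mathlib

section
/- There is a sufficiently small absolute constant c > 0 such that the following holds. Let 8 ≤ d ≤ n, ε ∈ (0,1), and k ≥ 2 be an integer; assume ε² ≥ max{8, ln d}/d and k ≤ c·ε·n/d. Let I ⊆ [n] with |I| ≤ n/8. Define Γ_k = {G ∈ D_{n,d} : ∃ S ⊆ [n]∖I with |S| = k such that |N^in_G(S)| ≤ (1−ε)·d·|S|}, and Γ = {G ∈ D_{n,d} : ∃ S ⊆ [n]∖I with 2 ≤ |S| ≤ c·ε·n/d such that |N^in_G(S)| ≤ (1−ε)·d·|S|}. Then for every F ⊆ [n]×[n] with D(I,F) ≠ ∅ one has P(Γ_k | D(I,F)) ≤ exp(−(ε²·d·k/8)·ln(3ecεn/(kd))), and P(Γ | D(I,F)) ≤ exp(−(ε²·d/8)·ln(ecεn/d)). -/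
open Finset
open scoped Classical

/-- `Dreg n d` is the set of `d`-regular digraphs on `n` vertices, encoded by their
Bool adjacency matrices: `G i j = true` iff there is an edge from `i` to `j`. -/
def Dreg (n d : ℕ) : Finset (Fin n → Fin n → Bool) :=
  Finset.univ.filter fun G =>
    (∀ i, (Finset.univ.filter fun j => G i j = true).card = d) ∧
    (∀ j, (Finset.univ.filter fun i => G i j = true).card = d)

/-- The set of in-neighbors of a set `S` of vertices. -/
def inNbr {n : ℕ} (G : Fin n → Fin n → Bool) (S : Finset (Fin n)) : Finset (Fin n) :=
  Finset.univ.filter fun v => ∃ i ∈ S, G v i = true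

/-- `Dcond n d S F` is the set of graphs in `Dreg n d` whose set of in-edges of `S`
(edges `(i,j)` with `j ∈ S`) equals `F`. -/
def Dcond (n d : ℕ) (S : Finset (Fin n)) (F : Finset (Fin n × Fin n)) :
    Finset (Fin n → Fin n → Bool) :=
  (Dreg n d).filter fun G =>
    (Finset.univ.filter fun p : Fin n × Fin n => G p.1 p.2 = true ∧ p.2 ∈ S) = F

/-!
Fix `S ⊆ [n] ∖ I` with `|S| = k`. A switching deletes edges `(v, i)`, `(w, j)` and adds
`(v, j)`, `(w, i)`, where `i ∈ S`, `v` sends at least two edges into `S`, `w` sends none and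
`j ∉ I ∪ S`. It keeps the digraph `d`-regular, keeps the in-edges of `I`, and adds exactly `w`
to `N^in(S)`. A digraph whose in-neighbourhood of `S` misses `s` of the `d k` possible vertices
admits at least `s · d n / 2` switchings, while at most `d³ k²` switchings lead to a given
digraph. Iterating `r = ⌈ε d k⌉` times bounds the conditional probability of
`|N^in(S)| ≤ (1 - ε) d k` by `(e d³ k² / (r · d n / 2))^r ≤ (2 e d k / (ε n))^(ε d k)`.
A union bound over the at most `(e n / k)^k` sets `S`, with `c = e⁻⁸⁰`, gives the bound on `Γ_k`,
and summing the bounds for `k ≥ 2`, which decay like `e⁻ᵏ`, gives the bound on `Γ`.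
-/

namespace GraphSparse

lemma card_filter_prod_eq_sum {α β : Type*} [Fintype α] [Fintype β] (P : α → β → Prop)
    [∀ a b, Decidable (P a b)] :
    #(univ.filter fun p : α × β => P p.1 p.2) = ∑ a, #(univ.filter fun b => P a b) := by
  simp only [card_filter, Fintype.sum_prod_type]

lemma card_filter_prod_eq_sum_right {α β : Type*} [Fintype α] [Fintype β] (P : α → β → Prop)
    [∀ a b, Decidable (P a b)] :
    #(univ.filter fun p : α × β => P p.1 p.2) = ∑ b, #(univ.filter fun a => P a b) := by
  simp only [card_filter, Fintype.sum_prod_type_right]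

lemma card_filter_eq_of_eq_comp_perm {V : Type*} [Fintype V] {p q : V → Bool} (σ : Equiv.Perm V)
    (h : p = q ∘ σ) : #(univ.filter fun b => p b = true) = #(univ.filter fun b => q b = true) := by
  subst h
  exact card_equiv σ (by simp)

theorem card_mul_le_card_mul_of_injective_switching {α β τ : Type*} {A : Finset α}
    {B : Finset β} (fwd : α → Finset τ) (bwd : β → Finset τ) (sw : α → τ → β) {m K : ℕ}
    (hfwd : ∀ a ∈ A, m ≤ #(fwd a)) (hbwd : ∀ b ∈ B, #(bwd b) ≤ K)
    (hmaps : ∀ a ∈ A, ∀ t ∈ fwd a, sw a t ∈ B ∧ t ∈ bwd (sw a t))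
    (hinj : ∀ a ∈ A, ∀ a' ∈ A, ∀ t ∈ fwd a, t ∈ fwd a' → sw a t = sw a' t → a = a') :
    #A * m ≤ #B * K := by
  have hsigma : #(A.sigma fwd) ≤ #(B.sigma bwd) := by
    refine card_le_card_of_injOn (fun x => ⟨sw x.1 x.2, x.2⟩) (fun x hx => ?_) ?_
    · rw [mem_coe, mem_sigma] at hx ⊢
      exact hmaps _ hx.1 _ hx.2
    · rintro ⟨a, t⟩ hx ⟨a', t'⟩ hx' h
      simp only [Sigma.mk.injEq, heq_eq_eq] at h
      obtain ⟨h, rfl⟩ := h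
      rw [mem_coe, mem_sigma] at hx hx'
      rw [hinj a hx.1 a' hx'.1 t hx.2 hx'.2 h]
  calc #A * m ≤ ∑ a ∈ A, #(fwd a) := by rw [← smul_eq_mul]; exact card_nsmul_le_sum _ _ _ hfwd
    _ = #(A.sigma fwd) := (card_sigma A fwd).symm
    _ ≤ #(B.sigma bwd) := hsigma
    _ = ∑ b ∈ B, #(bwd b) := card_sigma B bwd
    _ ≤ #B * K := by rw [← smul_eq_mul]; exact sum_le_card_nsmul _ _ _ hbwd

section Switching

variable {V : Type*}

def Switchable (G : V → V → Bool) (e f : V × V) : Prop :=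
  G e.1 e.2 = true ∧ G f.1 f.2 = true ∧ G f.1 e.2 = false ∧ G e.1 f.2 = false

variable {G : V → V → Bool} {e f : V × V}

lemma Switchable.fst_ne (h : Switchable G e f) : e.1 ≠ f.1 := fun h' => by
  simpa [← h', h.1] using h.2.2.1

lemma Switchable.snd_ne (h : Switchable G e f) : e.2 ≠ f.2 := fun h' => by
  simpa [← h', h.1] using h.2.2.2

variable [DecidableEq V]

def switch (G : V → V → Bool) (e f : V × V) : V → V → Bool := fun a b =>
  if (a, b) = e ∨ (a, b) = f then false
  else if (a, b) = (f.1, e.2) ∨ (a, b) = (e.1, f.2) then true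
  else G a b

lemma switch_apply_of_ne {a b : V} (hb₁ : b ≠ e.2) (hb₂ : b ≠ f.2) :
    switch G e f a b = G a b := by
  simp [switch, Prod.ext_iff, hb₁, hb₂]

lemma switch_row (h : Switchable G e f) (a : V) :
    switch G e f a = if a = e.1 ∨ a = f.1 then G a ∘ Equiv.swap e.2 f.2 else G a := by
  obtain ⟨⟨v, i⟩, ⟨w, j⟩⟩ := e, f
  have hvw : v ≠ w := h.fst_ne
  have hij : i ≠ j := h.snd_ne
  obtain ⟨hvi, hwj, hwi, hvj⟩ := h
  funext b
  simp only [switch, Prod.mk.injEq]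
  split_ifs <;> simp_all [Equiv.swap_apply_def] <;> split_ifs <;> simp_all

lemma switch_col (h : Switchable G e f) (b : V) :
    (fun a => switch G e f a b) =
      if b = e.2 ∨ b = f.2 then (fun a => G a b) ∘ Equiv.swap e.1 f.1 else fun a => G a b := by
  obtain ⟨⟨v, i⟩, ⟨w, j⟩⟩ := e, f
  have hvw : v ≠ w := h.fst_ne
  have hij : i ≠ j := h.snd_ne
  obtain ⟨hvi, hwj, hwi, hvj⟩ := h
  funext a
  simp only [switch, Prod.mk.injEq]
  split_ifs <;> simp_all [Equiv.swap_apply_def] <;> split_ifs <;> simp_all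

lemma switch_apply_fst_snd (h : Switchable G e f) : switch G e f e.1 f.2 = true := by
  simp [switch, Prod.ext_iff, h.fst_ne, h.snd_ne.symm]

lemma switch_apply_snd_fst (h : Switchable G e f) : switch G e f f.1 e.2 = true := by
  simp [switch, Prod.ext_iff, h.fst_ne.symm, h.snd_ne]

lemma switch_switch (h : Switchable G e f) :
    switch (switch G e f) (e.1, f.2) (f.1, e.2) = G := by
  obtain ⟨⟨v, i⟩, ⟨w, j⟩⟩ := e, f
  obtain ⟨hvi, hwj, hwi, hvj⟩ := h
  funext a b
  simp only [switch, Prod.mk.injEq]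
  split_ifs <;>
    first
    | rfl
    | rcases ‹_ ∨ _› with ⟨rfl, rfl⟩ | ⟨rfl, rfl⟩ <;> simp_all

lemma card_row_switch [Fintype V] (h : Switchable G e f) (a : V) :
    #(univ.filter fun b => switch G e f a b = true) = #(univ.filter fun b => G a b = true) := by
  by_cases ha : a = e.1 ∨ a = f.1
  · exact card_filter_eq_of_eq_comp_perm _ (by rw [switch_row h, if_pos ha])
  · exact card_filter_eq_of_eq_comp_perm 1 (by rw [switch_row h, if_neg ha]; rfl)

lemma card_col_switch [Fintype V] (h : Switchable G e f) (b : V) :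
    #(univ.filter fun a => switch G e f a b = true) = #(univ.filter fun a => G a b = true) := by
  by_cases hb : b = e.2 ∨ b = f.2
  · exact card_filter_eq_of_eq_comp_perm (p := fun a => switch G e f a b) _
      (by rw [switch_col h, if_pos hb])
  · exact card_filter_eq_of_eq_comp_perm (p := fun a => switch G e f a b) 1
      (by rw [switch_col h, if_neg hb]; rfl)

end Switching

section Counting

variable {n d : ℕ} {G : Fin n → Fin n → Bool}

def degInto (G : Fin n → Fin n → Bool) (S : Finset (Fin n)) (v : Fin n) : ℕ :=
  #(S.filter fun i => G v i = true)

lemma mem_inNbr_iff_degInto_pos {S : Finset (Fin n)} {v : Fin n} :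
    v ∈ inNbr G S ↔ 0 < degInto G S v := by
  simp [inNbr, degInto, card_pos, Finset.Nonempty]

lemma card_row (hG : G ∈ Dreg n d) (v : Fin n) : #(univ.filter fun j => G v j = true) = d :=
  (mem_filter.mp hG).2.1 v

lemma card_col (hG : G ∈ Dreg n d) (j : Fin n) : #(univ.filter fun i => G i j = true) = d :=
  (mem_filter.mp hG).2.2 j

lemma card_edges_fst_mem (hG : G ∈ Dreg n d) (T : Finset (Fin n)) :
    #(univ.filter fun p : Fin n × Fin n => G p.1 p.2 = true ∧ p.1 ∈ T) = #T * d := by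
  rw [card_filter_prod_eq_sum (fun a b => G a b = true ∧ a ∈ T)]
  calc ∑ a, #(univ.filter fun b => G a b = true ∧ a ∈ T) = ∑ a, if a ∈ T then d else 0 :=
        sum_congr rfl fun a _ => by split_ifs with ha <;> simp [ha, card_row hG]
    _ = #T * d := by simp

lemma card_edges_snd_mem (hG : G ∈ Dreg n d) (T : Finset (Fin n)) :
    #(univ.filter fun p : Fin n × Fin n => G p.1 p.2 = true ∧ p.2 ∈ T) = #T * d := by
  rw [card_filter_prod_eq_sum_right (fun a b => G a b = true ∧ b ∈ T)]
  calc ∑ b, #(univ.filter fun a => G a b = true ∧ b ∈ T) = ∑ b, if b ∈ T then d else 0 :=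
        sum_congr rfl fun b _ => by split_ifs with hb <;> simp [hb, card_col hG]
    _ = #T * d := by simp

variable (S : Finset (Fin n))

lemma sum_degInto (hG : G ∈ Dreg n d) : ∑ v, degInto G S v = #S * d := by
  rw [← card_edges_snd_mem hG S, card_filter_prod_eq_sum (fun a b => G a b = true ∧ b ∈ S)]
  exact sum_congr rfl fun v _ => by
    rw [degInto]; congr 1; ext i; simp [and_comm]

lemma card_inNbr_le (hG : G ∈ Dreg n d) : #(inNbr G S) ≤ #S * d := by
  rw [← sum_degInto S hG, card_eq_sum_ones]
  calc ∑ v ∈ inNbr G S, 1 ≤ ∑ v ∈ inNbr G S, degInto G S v :=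
        sum_le_sum fun v hv => mem_inNbr_iff_degInto_pos.mp hv
    _ ≤ ∑ v, degInto G S v := sum_le_univ_sum_of_nonneg fun _ => Nat.zero_le _

def heavyEdges (G : Fin n → Fin n → Bool) (S : Finset (Fin n)) : Finset (Fin n × Fin n) :=
  univ.filter fun e => G e.1 e.2 = true ∧ e.2 ∈ S ∧ 2 ≤ degInto G S e.1

def freeEdges (G : Fin n → Fin n → Bool) (I S : Finset (Fin n)) (v : Fin n) :
    Finset (Fin n × Fin n) :=
  univ.filter fun f => G f.1 f.2 = true ∧ f.1 ∉ inNbr G S ∧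
    f.2 ∉ I ∪ S ∪ univ.filter fun j => G v j = true

lemma card_le_card_heavyEdges_add (hG : G ∈ Dreg n d) :
    #S * d ≤ #(heavyEdges G S) + #(inNbr G S) := by
  have hheavy : #(heavyEdges G S) = ∑ v, if 2 ≤ degInto G S v then degInto G S v else 0 := by
    rw [heavyEdges, card_filter_prod_eq_sum (fun a b => G a b = true ∧ b ∈ S ∧ 2 ≤ degInto G S a)]
    refine sum_congr rfl fun v _ => ?_
    split_ifs with h
    · simp only [h, and_true]
      unfold degInto
      congr 1; ext i; simp [and_comm]
    · simp [h]
  have hnbr : #(inNbr G S) = ∑ v, if 0 < degInto G S v then 1 else 0 := by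
    simp only [← mem_inNbr_iff_degInto_pos, ← card_filter, filter_mem_eq_inter, univ_inter]
  rw [hheavy, hnbr, ← sum_add_distrib, ← sum_degInto S hG]
  refine sum_le_sum fun v _ => ?_
  split_ifs <;> omega

lemma card_edges_le_card_avoiding_add (hG : G ∈ Dreg n d) (X Y : Finset (Fin n)) :
    n * d ≤ #(univ.filter fun p : Fin n × Fin n => G p.1 p.2 = true ∧ p.1 ∉ X ∧ p.2 ∉ Y)
      + (#X + #Y) * d := by
  have hcover : (univ.filter fun p : Fin n × Fin n => G p.1 p.2 = true ∧ p.1 ∈ univ) ⊆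
      ((univ.filter fun p : Fin n × Fin n => G p.1 p.2 = true ∧ p.1 ∉ X ∧ p.2 ∉ Y) ∪
        univ.filter fun p : Fin n × Fin n => G p.1 p.2 = true ∧ p.1 ∈ X) ∪
        univ.filter fun p : Fin n × Fin n => G p.1 p.2 = true ∧ p.2 ∈ Y := by
    intro p
    simp only [mem_filter, mem_union, mem_univ, true_and, and_true]
    tauto
  have h := (card_le_card hcover).trans ((card_union_le _ _).trans
    (Nat.add_le_add_right (card_union_le _ _) _))
  rw [card_edges_fst_mem hG, card_edges_fst_mem hG, card_edges_snd_mem hG, card_univ,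
    Fintype.card_fin] at h
  rw [add_mul]
  omega

lemma card_freeEdges_ge (hG : G ∈ Dreg n d) (I : Finset (Fin n)) (v : Fin n) :
    (n - (#S * d + #I + #S + d)) * d ≤ #(freeEdges G I S v) := by
  have h := card_edges_le_card_avoiding_add hG (inNbr G S)
    (I ∪ S ∪ univ.filter fun j => G v j = true)
  have hY : #(I ∪ S ∪ univ.filter fun j => G v j = true) ≤ #I + #S + d :=
    (card_union_le _ _).trans (add_le_add (card_union_le _ _) (card_row hG v).le)
  have hX := card_inNbr_le S hG
  have h' : n * d ≤ #(freeEdges G I S v) + (#S * d + #I + #S + d) * d :=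
    h.trans (Nat.add_le_add_left (Nat.mul_le_mul_right d (by omega)) _)
  rw [Nat.sub_mul]
  omega

end Counting

section Moves

variable {n d : ℕ} {G : Fin n → Fin n → Bool} {I S : Finset (Fin n)}
  {t : Σ _ : Fin n × Fin n, Fin n × Fin n}

def moves (G : Fin n → Fin n → Bool) (I S : Finset (Fin n)) :
    Finset (Σ _ : Fin n × Fin n, Fin n × Fin n) :=
  (heavyEdges G S).sigma fun e => freeEdges G I S e.1

-- A switching into `G'` is determined by the edges `(v, j)`, `(w, i)` of `G'` it created,
-- and these satisfy `v ∈ N^in(S)` and `i ∈ S`.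
def backMoves (G : Fin n → Fin n → Bool) (S : Finset (Fin n)) :
    Finset (Σ _ : Fin n × Fin n, Fin n × Fin n) :=
  ((univ.filter fun p : Fin n × Fin n => G p.1 p.2 = true ∧ p.1 ∈ inNbr G S) ×ˢ
    (univ.filter fun p : Fin n × Fin n => G p.1 p.2 = true ∧ p.2 ∈ S)).image
    fun x => ⟨(x.1.1, x.2.2), (x.2.1, x.1.2)⟩

lemma card_moves_ge (hG : G ∈ Dreg n d) :
    #(heavyEdges G S) * ((n - (#S * d + #I + #S + d)) * d) ≤ #(moves G I S) := by
  rw [moves, card_sigma, ← smul_eq_mul]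
  exact card_nsmul_le_sum _ _ _ fun e _ => card_freeEdges_ge S hG I e.1

lemma card_backMoves_le (hG : G ∈ Dreg n d) : #(backMoves G S) ≤ #S * d * d * (#S * d) := by
  refine card_image_le.trans ?_
  rw [card_product, card_edges_fst_mem hG, card_edges_snd_mem hG]
  exact Nat.mul_le_mul_right _ (Nat.mul_le_mul_right _ (card_inNbr_le S hG))

lemma switchable_of_mem_moves (ht : t ∈ moves G I S) : Switchable G t.1 t.2 := by
  obtain ⟨⟨v, i⟩, ⟨w, j⟩⟩ := t
  simp only [moves, heavyEdges, freeEdges, mem_sigma, mem_filter, mem_univ, true_and,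
    mem_union, not_or] at ht
  obtain ⟨⟨hvi, hiS, -⟩, hwj, hw, -, hvj⟩ := ht
  refine ⟨hvi, hwj, ?_, by simpa using hvj⟩
  by_contra hwi
  exact hw ((mem_inNbr_iff_degInto_pos).mpr (card_pos.mpr ⟨i, by simpa [hiS] using hwi⟩))

lemma notMem_inNbr_of_mem_moves (ht : t ∈ moves G I S) : t.2.1 ∉ inNbr G S :=
  (mem_filter.mp (mem_sigma.mp ht).2).2.2.1

lemma inNbr_switch (ht : t ∈ moves G I S) :
    inNbr (switch G t.1 t.2) S = insert t.2.1 (inNbr G S) := by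
  have hsw := switchable_of_mem_moves ht
  obtain ⟨⟨v, i⟩, ⟨w, j⟩⟩ := t
  simp only [moves, heavyEdges, freeEdges, mem_sigma, mem_filter, mem_univ, true_and,
    mem_union, not_or] at ht
  obtain ⟨⟨-, hiS, hv⟩, -, -, ⟨-, hjS⟩, -⟩ := ht
  ext u
  simp only [inNbr, mem_insert, mem_filter, mem_univ, true_and]
  by_cases hu : u = v ∨ u = w
  · rcases hu with rfl | rfl
    · obtain ⟨i', hi', hi'i⟩ := exists_mem_ne (hv : 1 < #(S.filter fun i => G u i = true)) i
      rw [mem_filter] at hi'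
      have hi'j : i' ≠ j := fun h => hjS (h ▸ hi'.1)
      refine iff_of_true ⟨i', hi'.1, ?_⟩ (Or.inr ⟨i', hi'⟩)
      rw [switch_row hsw, if_pos (Or.inl rfl)]
      simpa [Equiv.swap_apply_of_ne_of_ne hi'i hi'j] using hi'.2
    · exact iff_of_true ⟨i, hiS, switch_apply_snd_fst hsw⟩ (Or.inl rfl)
  · rw [switch_row hsw, if_neg hu, or_iff_right (fun h => hu (Or.inr h))]

lemma mem_Dcond_switch {F : Finset (Fin n × Fin n)} (hSI : Disjoint S I)
    (hG : G ∈ Dcond n d I F) (ht : t ∈ moves G I S) : switch G t.1 t.2 ∈ Dcond n d I F := by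
  have hsw := switchable_of_mem_moves ht
  obtain ⟨⟨v, i⟩, ⟨w, j⟩⟩ := t
  simp only [moves, heavyEdges, freeEdges, mem_sigma, mem_filter, mem_univ, true_and,
    mem_union, not_or] at ht
  obtain ⟨⟨-, hiS, -⟩, -, -, ⟨hjI, -⟩, -⟩ := ht
  simp only [Dcond, Dreg, mem_filter, mem_univ, true_and] at hG ⊢
  refine ⟨⟨fun a => (card_row_switch hsw a).trans (hG.1.1 a),
    fun b => (card_col_switch hsw b).trans (hG.1.2 b)⟩, ?_⟩
  rw [← hG.2]
  ext ⟨a, b⟩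
  simp only [mem_filter, mem_univ, true_and]
  by_cases hb : b ∈ I
  · rw [switch_apply_of_ne (by rintro rfl; exact disjoint_left.mp hSI hiS hb)
      (by rintro rfl; exact hjI hb)]
  · simp [hb]

lemma mem_backMoves_switch (ht : t ∈ moves G I S) : t ∈ backMoves (switch G t.1 t.2) S := by
  have hsw := switchable_of_mem_moves ht
  have hnbr := inNbr_switch ht
  obtain ⟨⟨v, i⟩, ⟨w, j⟩⟩ := t
  simp only [moves, heavyEdges, mem_sigma, mem_filter, mem_univ, true_and] at ht
  obtain ⟨⟨-, hiS, hv⟩, -⟩ := ht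
  refine mem_image.mpr ⟨((v, j), (w, i)), ?_, rfl⟩
  simp only [mem_product, mem_filter, mem_univ, true_and]
  refine ⟨⟨switch_apply_fst_snd hsw, ?_⟩, switch_apply_snd_fst hsw, hiS⟩
  rw [hnbr]
  exact mem_insert_of_mem (mem_inNbr_iff_degInto_pos.mpr (by omega))

end Moves

section Deficient

open scoped Nat

variable {n d : ℕ} {I S : Finset (Fin n)} {F : Finset (Fin n × Fin n)}

def deficient (n d : ℕ) (I : Finset (Fin n)) (F : Finset (Fin n × Fin n)) (S : Finset (Fin n))
    (s : ℕ) : Finset (Fin n → Fin n → Bool) :=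
  (Dcond n d I F).filter fun G => #(inNbr G S) + s ≤ #S * d

lemma card_deficient_succ_mul_le (hSI : Disjoint S I) (s : ℕ) :
    #(deficient n d I F S (s + 1)) * ((s + 1) * ((n - (#S * d + #I + #S + d)) * d)) ≤
      #(deficient n d I F S s) * (#S * d * d * (#S * d)) := by
  refine card_mul_le_card_mul_of_injective_switching (fun G => moves G I S)
    (fun G => backMoves G S) (fun G t => switch G t.1 t.2) (fun G hG => ?_) (fun G hG => ?_)
    (fun G hG t ht => ?_) (fun G hG G' hG' t ht ht' h => ?_)
  · obtain ⟨hGD, hdef⟩ := mem_filter.mp hG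
    have hreg : G ∈ Dreg n d := (mem_filter.mp hGD).1
    have hheavy := card_le_card_heavyEdges_add S hreg
    exact (Nat.mul_le_mul_right _ (by omega)).trans (card_moves_ge hreg)
  · exact card_backMoves_le (mem_filter.mp (mem_filter.mp hG).1).1
  · obtain ⟨hGD, hdef⟩ := mem_filter.mp hG
    refine ⟨mem_filter.mpr ⟨mem_Dcond_switch hSI hGD ht, ?_⟩, mem_backMoves_switch ht⟩
    rw [inNbr_switch ht, card_insert_of_notMem (notMem_inNbr_of_mem_moves ht)]
    omega
  · rw [← switch_switch (switchable_of_mem_moves ht),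
      ← switch_switch (switchable_of_mem_moves ht')]
    exact congrArg (switch · _ _) h

lemma card_deficient_mul_le (hSI : Disjoint S I) (r : ℕ) :
    #(deficient n d I F S r) * (r ! * ((n - (#S * d + #I + #S + d)) * d) ^ r) ≤
      #(Dcond n d I F) * (#S * d * d * (#S * d)) ^ r := by
  set M := (n - (#S * d + #I + #S + d)) * d
  set K := #S * d * d * (#S * d)
  induction r with
  | zero =>
    simp only [Nat.factorial_zero, pow_zero, mul_one]
    exact card_le_card (filter_subset _ _)
  | succ r ih =>
    calc #(deficient n d I F S (r + 1)) * ((r + 1)! * M ^ (r + 1))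
        = #(deficient n d I F S (r + 1)) * ((r + 1) * M) * (r ! * M ^ r) := by
          rw [Nat.factorial_succ, pow_succ]; ring
      _ ≤ #(deficient n d I F S r) * K * (r ! * M ^ r) :=
          Nat.mul_le_mul_right _ (card_deficient_succ_mul_le hSI r)
      _ = #(deficient n d I F S r) * (r ! * M ^ r) * K := by ring
      _ ≤ #(Dcond n d I F) * K ^ r * K := Nat.mul_le_mul_right _ ih
      _ = #(Dcond n d I F) * K ^ (r + 1) := by rw [pow_succ, mul_assoc]

end Deficient

section Estimates

open Real
open scoped Nat

lemma div_exp_one_pow_le_factorial (r : ℕ) : ((r : ℝ) / exp 1) ^ r ≤ r ! := by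
  have h := pow_div_factorial_le_exp (r : ℝ) (Nat.cast_nonneg r) r
  rw [← exp_one_pow] at h
  rw [div_pow, div_le_iff₀ (by positivity)]
  rwa [div_le_iff₀ (by positivity), mul_comm] at h

lemma choose_le_exp_one_mul_div_pow (n k : ℕ) : (n.choose k : ℝ) ≤ (exp 1 * n / k) ^ k := by
  rcases Nat.eq_zero_or_pos k with rfl | hk
  · simp
  have hk' : (0 : ℝ) < k := by exact_mod_cast hk
  calc (n.choose k : ℝ) ≤ (n : ℝ) ^ k / k ! := Nat.choose_le_pow_div k n
    _ ≤ (n : ℝ) ^ k / ((k : ℝ) / exp 1) ^ k :=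
        div_le_div_of_nonneg_left (by positivity) (by positivity) (div_exp_one_pow_le_factorial k)
    _ = (exp 1 * n / k) ^ k := by rw [← div_pow]; congr 1; field_simp

lemma le_mul_pow_of_mul_factorial_mul_pow_le {C D K M q : ℝ} {r : ℕ} (hD : 0 ≤ D) (hK : 0 ≤ K)
    (hM : 0 < M) (hq : 0 ≤ q) (h : C * (r ! * M ^ r) ≤ D * K ^ r) (hKq : exp 1 * K ≤ r * M * q) :
    C ≤ D * q ^ r := by
  have hK' : K ≤ r / exp 1 * M * q := by
    rw [div_mul_eq_mul_div, div_mul_eq_mul_div, le_div_iff₀ (exp_pos 1)]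
    linarith
  have hpow : K ^ r ≤ r ! * M ^ r * q ^ r :=
    calc K ^ r ≤ (r / exp 1 * M * q) ^ r := pow_le_pow_left₀ hK hK' r
      _ = (r / exp 1) ^ r * M ^ r * q ^ r := by rw [mul_pow, mul_pow]
      _ ≤ r ! * M ^ r * q ^ r := by
          gcongr
          exact div_exp_one_pow_le_factorial r
  have hpos : (0 : ℝ) < r ! * M ^ r := by positivity
  refine le_of_mul_le_mul_right ?_ hpos
  calc C * (r ! * M ^ r) ≤ D * K ^ r := h
    _ ≤ D * (r ! * M ^ r * q ^ r) := mul_le_mul_of_nonneg_left hpow hD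
    _ = D * q ^ r * (r ! * M ^ r) := by ring

lemma pow_le_exp_mul_log {q x : ℝ} {r : ℕ} (hq0 : 0 < q) (hq1 : q ≤ 1) (hx : x ≤ r) :
    q ^ r ≤ exp (x * log q) := by
  rw [← exp_log (pow_pos hq0 r), log_pow]
  exact exp_le_exp.mpr (mul_le_mul_of_nonpos_right hx (log_nonpos hq0.le hq1))

lemma exponent_le {ε d n k : ℝ} (hε0 : 0 < ε) (hε1 : ε < 1) (hk : 0 < k) (hd8 : 8 ≤ ε ^ 2 * d)
    (hlogd : log d ≤ ε ^ 2 * d) (hdk : exp 80 * (d * k) ≤ ε * n) :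
    k * log (exp 1 * n / k) + ε * d * k * log (2 * exp 1 * d * k / (ε * n)) ≤
      -(ε ^ 2 * d * k / 8) * log (3 * exp 1 * exp (-80) * ε * n / (k * d)) := by
  have hd : 0 < d := by nlinarith
  have hn : 0 < n := by nlinarith [exp_pos 80, mul_pos hd hk]
  set L := log (ε * n / (d * k))
  have ha : exp L = ε * n / (d * k) := exp_log (by positivity)
  have hL : 80 ≤ L := by
    rw [← exp_le_exp, ha, le_div_iff₀ (by positivity)]
    exact hdk
  have hlogε : -log ε ≤ log d := by
    have h1 : 1 ≤ ε ^ 2 * d := by linarith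
    have h2 := log_le_log one_pos h1
    rw [log_one, log_mul (by positivity) hd.ne', log_pow] at h2
    have h3 : 0 ≤ log d :=
      log_nonneg (by nlinarith [sq_nonneg ε, pow_lt_one₀ hε0.le hε1 two_ne_zero])
    push_cast at h2
    linarith
  have h1 : exp 1 * n / k = exp (1 + L + log d - log ε) := by
    rw [exp_sub, exp_add, exp_add, ha, exp_log hd, exp_log hε0]; field_simp
  have h2 : 2 * exp 1 * d * k / (ε * n) = exp (log 2 + 1 - L) := by
    rw [exp_sub, exp_add, ha, exp_log two_pos]; field_simp
  have h3 : 3 * exp 1 * exp (-80) * ε * n / (k * d) = exp (log 3 + 1 - 80 + L) := by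
    rw [exp_add, exp_sub, exp_add, ha, exp_log three_pos, exp_neg]; field_simp
  have hεd : ε ^ 2 * d ≤ ε * d := by nlinarith [mul_pos hε0 hd]
  have l2 : log 2 < 0.6931471808 := log_two_lt_d9
  have l3 : log 3 ≤ 2 := by linarith [log_le_sub_one_of_pos (by norm_num : (0 : ℝ) < 3)]
  have key : 1 + L + log d - log ε + ε * d * (log 2 + 1 - L) +
      ε ^ 2 * d / 8 * (log 3 + 1 - 80 + L) ≤ 0 := by
    nlinarith [mul_nonneg (sub_nonneg.2 hεd) (by linarith : (0 : ℝ) ≤ L - 78),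
      mul_nonneg (by linarith : (0 : ℝ) ≤ ε * d - 8) (by linarith : (0 : ℝ) ≤ L)]
  rw [h1, h2, h3, log_exp, log_exp, log_exp]
  nlinarith [mul_nonpos_of_nonneg_of_nonpos hk.le key]

lemma exp_neg_mul_log_le {X a k : ℝ} (hX : 1 ≤ X) (hk : 2 ≤ k) (hka : k ≤ a) :
    exp (-(X * k) * log (3 * exp 1 * a / k)) ≤ exp (-X * log (exp 1 * a)) * exp (-k) := by
  have hk0 : 0 < k := by linarith
  have ha0 : 0 < a := by linarith
  have hlogk : log k ≤ k - 1 := log_le_sub_one_of_pos (by linarith)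
  have hlogk0 : 0 ≤ log k := log_nonneg (by linarith)
  have hlogka : log k ≤ log a := log_le_log (by linarith) hka
  have hlog3 : 1 ≤ log 3 := by
    rw [le_log_iff_exp_le three_pos]; linarith [exp_one_lt_d9]
  rw [← exp_add, exp_le_exp, log_div (by positivity) hk0.ne', log_mul (by positivity) ha0.ne',
    log_mul (by positivity) (exp_pos 1).ne', log_mul (exp_pos 1).ne' ha0.ne', log_exp]
  nlinarith [mul_nonneg (by linarith : (0 : ℝ) ≤ k - 1) (sub_nonneg.2 hlogka),
    mul_nonneg (by linarith : (0 : ℝ) ≤ X - 1) (by linarith : (0 : ℝ) ≤ k - 1)]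

lemma sum_Icc_exp_neg_le_one (K : ℕ) : ∑ k ∈ Icc 2 K, exp (-(k : ℝ)) ≤ 1 := by
  have hx : exp (-1) ≤ 1 / 2 := by
    rw [exp_neg, one_div]; exact inv_anti₀ two_pos (by linarith [add_one_le_exp (1 : ℝ)])
  have hx0 := exp_pos (-1)
  calc ∑ k ∈ Icc 2 K, exp (-(k : ℝ)) = ∑ k ∈ Ico 2 (K + 1), exp (-1) ^ k := by
        rw [← Ico_add_one_right_eq_Icc]
        exact sum_congr rfl fun k _ => by rw [← exp_nat_mul]; ring_nf
    _ ≤ exp (-1) ^ 2 / (1 - exp (-1)) := geom_sum_Ico_le_of_lt_one hx0.le (by linarith)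
    _ ≤ 1 := by rw [div_le_one (by linarith)]; nlinarith

end Estimates

section Expansion

open Real
open scoped Nat

variable {n d : ℕ} {ε : ℝ} {I S : Finset (Fin n)} {F : Finset (Fin n × Fin n)}

theorem card_filter_inNbr_le_mul_exp (hSI : Disjoint S I) (hε : 0 < ε) (hd : 0 < d)
    (hS : S.Nonempty) (hn : 2 * (#S * d + #I + #S + d) ≤ n)
    (hq : 2 * exp 1 * d * #S ≤ ε * n) :
    (#((Dcond n d I F).filter fun G => (#(inNbr G S) : ℝ) ≤ (1 - ε) * d * #S) : ℝ) ≤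
      #(Dcond n d I F) * exp (ε * d * #S * log (2 * exp 1 * d * #S / (ε * n))) := by
  set r := ⌈ε * d * #S⌉₊
  set M := (n - (#S * d + #I + #S + d)) * d
  set q := 2 * exp 1 * d * #S / (ε * n)
  have hk : (0 : ℝ) < #S := by exact_mod_cast hS.card_pos
  have hd' : (0 : ℝ) < d := by exact_mod_cast hd
  have hn' : (0 : ℝ) < n := by exact_mod_cast (show 0 < n by omega)
  have hsub : (Dcond n d I F).filter (fun G => (#(inNbr G S) : ℝ) ≤ (1 - ε) * d * #S) ⊆
      deficient n d I F S r := by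
    intro G hG
    obtain ⟨hGD, hGS⟩ := mem_filter.mp hG
    have hN := card_inNbr_le S (mem_filter.mp hGD).1
    have hr : r ≤ #S * d - #(inNbr G S) := by
      refine Nat.ceil_le.mpr ?_
      rw [Nat.cast_sub hN]
      push_cast
      linarith
    exact mem_filter.mpr ⟨hGD, by omega⟩
  have hchain : (#(deficient n d I F S r) : ℝ) * (r ! * (M : ℝ) ^ r) ≤
      #(Dcond n d I F) * ((#S * d * d * (#S * d) : ℕ) : ℝ) ^ r := by
    exact_mod_cast card_deficient_mul_le hSI r
  have hM : (d : ℝ) * n / 2 ≤ M := by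
    have hX : #S * d + #I + #S + d ≤ n := by omega
    have hX' : 2 * ((#S * d + #I + #S + d : ℕ) : ℝ) ≤ n := by exact_mod_cast hn
    simp only [M]
    push_cast [Nat.cast_sub hX] at hX' ⊢
    nlinarith
  have hq0 : 0 < q := by positivity
  have hq1 : q ≤ 1 := (div_le_one (by positivity)).mpr (by linarith)
  -- `q` is chosen so that `e K ≤ r M q` with `K = d³ k²`, using `r ≥ ε d k` and `M ≥ d n / 2`.
  have hKq : exp 1 * ((#S * d * d * (#S * d) : ℕ) : ℝ) ≤ r * M * q := by
    have hr : ε * d * #S ≤ r := Nat.le_ceil _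
    calc exp 1 * ((#S * d * d * (#S * d) : ℕ) : ℝ) = ε * d * #S * (d * n / 2) * q := by
          simp only [q]; push_cast; field_simp
      _ ≤ r * M * q := by gcongr
  calc (#((Dcond n d I F).filter fun G => (#(inNbr G S) : ℝ) ≤ (1 - ε) * d * #S) : ℝ)
      ≤ #(deficient n d I F S r) := by exact_mod_cast card_le_card hsub
    _ ≤ #(Dcond n d I F) * q ^ r :=
        le_mul_pow_of_mul_factorial_mul_pow_le (by positivity) (by positivity)
          (by linarith [show 0 < (d : ℝ) * n / 2 by positivity]) hq0.le hchain hKq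
    _ ≤ #(Dcond n d I F) * exp (ε * d * #S * log q) := by
        gcongr
        exact pow_le_exp_mul_log hq0 hq1 (Nat.le_ceil _)

noncomputable def gammak (n d k : ℕ) (ε : ℝ) (I : Finset (Fin n)) :
    Finset (Fin n → Fin n → Bool) :=
  (Dreg n d).filter fun G => ∃ S : Finset (Fin n), S ⊆ Iᶜ ∧ S.card = k ∧
    ((inNbr G S).card : ℝ) ≤ (1 - ε) * d * S.card

theorem card_gammak_inter_le {k : ℕ} (hε : 0 < ε) (hd : 0 < d) (hk : 0 < k)
    (hn : 2 * (k * d + #I + k + d) ≤ n) (hq : 2 * exp 1 * d * k ≤ ε * n) :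
    (#(gammak n d k ε I ∩ Dcond n d I F) : ℝ) ≤ #(Dcond n d I F) *
      exp (k * log (exp 1 * n / k) + ε * d * k * log (2 * exp 1 * d * k / (ε * n))) := by
  set B := #(Dcond n d I F) * exp (ε * d * k * log (2 * exp 1 * d * k / (ε * n)))
  have hsub : gammak n d k ε I ∩ Dcond n d I F ⊆ (Iᶜ.powersetCard k).biUnion fun S =>
      (Dcond n d I F).filter fun G => (#(inNbr G S) : ℝ) ≤ (1 - ε) * d * #S := by
    intro G hG
    obtain ⟨hGk, hGD⟩ := mem_inter.mp hG
    obtain ⟨-, S, hSI, hSk, hGS⟩ := mem_filter.mp hGk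
    exact mem_biUnion.mpr ⟨S, mem_powersetCard.mpr ⟨hSI, hSk⟩, mem_filter.mpr ⟨hGD, hGS⟩⟩
  have hS : ∀ S ∈ Iᶜ.powersetCard k,
      (#((Dcond n d I F).filter fun G => (#(inNbr G S) : ℝ) ≤ (1 - ε) * d * #S) : ℝ) ≤ B := by
    intro S hS
    obtain ⟨hSI, rfl⟩ := mem_powersetCard.mp hS
    exact card_filter_inNbr_le_mul_exp (subset_compl_iff_disjoint_right.mp hSI) hε hd
      (card_pos.mp hk) (by linarith) hq
  have hn' : (0 : ℝ) < n := by exact_mod_cast (show 0 < n by omega)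
  have hchoose : (#(Iᶜ.powersetCard k) : ℝ) ≤ exp (k * log (exp 1 * n / k)) := by
    rw [card_powersetCard, ← log_pow, exp_log (by positivity)]
    calc ((#Iᶜ).choose k : ℝ) ≤ (n.choose k : ℕ) := by
          exact_mod_cast Nat.choose_le_choose k ((card_le_univ _).trans_eq (Fintype.card_fin n))
      _ ≤ (exp 1 * n / k) ^ k := choose_le_exp_one_mul_div_pow n k
  calc (#(gammak n d k ε I ∩ Dcond n d I F) : ℝ)
      ≤ ∑ S ∈ Iᶜ.powersetCard k,
          (#((Dcond n d I F).filter fun G => (#(inNbr G S) : ℝ) ≤ (1 - ε) * d * #S) : ℝ) := by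
        exact_mod_cast (card_le_card hsub).trans card_biUnion_le
    _ ≤ #(Iᶜ.powersetCard k) * B := by
        rw [← nsmul_eq_mul]; exact sum_le_card_nsmul _ _ _ hS
    _ ≤ exp (k * log (exp 1 * n / k)) * B := by gcongr
    _ = _ := by rw [exp_add]; ring

theorem card_gammak_inter_le_exp {k : ℕ} (hd8 : 8 ≤ d) (hε0 : 0 < ε) (hε1 : ε < 1)
    (hk2 : 2 ≤ k) (hε2 : max 8 (log d) / d ≤ ε ^ 2) (hkc : (k : ℝ) ≤ exp (-80) * ε * n / d)
    (hI : (#I : ℝ) ≤ n / 8) :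
    (#(gammak n d k ε I ∩ Dcond n d I F) : ℝ) ≤
      exp (-(ε ^ 2 * d * k / 8) * log (3 * exp 1 * exp (-80) * ε * n / (k * d))) *
        #(Dcond n d I F) := by
  have hd : (8 : ℝ) ≤ d := by exact_mod_cast hd8
  have hk : (2 : ℝ) ≤ k := by exact_mod_cast hk2
  have hmax : max 8 (log d) ≤ ε ^ 2 * d := (div_le_iff₀ (by positivity)).mp hε2
  have hdk : exp 80 * (d * k) ≤ ε * n := by
    rw [le_div_iff₀ (by positivity)] at hkc
    calc exp 80 * (d * k) ≤ exp 80 * (exp (-80) * ε * n) := by nlinarith [exp_pos 80]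
      _ = ε * n := by rw [← mul_assoc, ← mul_assoc, ← exp_add]; norm_num
  have h81 : 81 ≤ exp 80 := by linarith [add_one_le_exp (80 : ℝ)]
  have hεn : ε * n ≤ n := by nlinarith [(Nat.cast_nonneg n : (0 : ℝ) ≤ n)]
  have hn : 2 * (k * d + #I + k + d) ≤ n := by
    have h1 : 81 * ((d : ℝ) * k) ≤ n := by nlinarith
    have h2 : (k : ℝ) * 8 ≤ d * k := by nlinarith
    have h3 : (d : ℝ) * 2 ≤ d * k := by nlinarith
    have : 2 * ((k : ℝ) * d + #I + k + d) ≤ n := by nlinarith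
    exact_mod_cast this
  have hq : 2 * exp 1 * d * k ≤ ε * n := by
    nlinarith [exp_one_lt_d9, mul_pos (by positivity : (0 : ℝ) < d) (by positivity : (0 : ℝ) < k)]
  refine (card_gammak_inter_le hε0 (by omega) (by omega) hn hq).trans ?_
  rw [mul_comm]
  gcongr
  exact exponent_le hε0 hε1 (by positivity) ((le_max_left _ _).trans hmax)
    ((le_max_right _ _).trans hmax) hdk

noncomputable def gamma (n d : ℕ) (c ε : ℝ) (I : Finset (Fin n)) :
    Finset (Fin n → Fin n → Bool) :=
  (Dreg n d).filter fun G => ∃ S : Finset (Fin n), S ⊆ Iᶜ ∧ 2 ≤ S.card ∧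
    (S.card : ℝ) ≤ c * ε * n / d ∧ ((inNbr G S).card : ℝ) ≤ (1 - ε) * d * S.card

theorem card_gamma_inter_le_exp (hd8 : 8 ≤ d) (hε0 : 0 < ε) (hε1 : ε < 1)
    (hε2 : max 8 (log d) / d ≤ ε ^ 2) (hI : (#I : ℝ) ≤ n / 8) :
    (#(gamma n d (exp (-80)) ε I ∩ Dcond n d I F) : ℝ) ≤
      exp (-(ε ^ 2 * d / 8) * log (exp 1 * exp (-80) * ε * n / d)) * #(Dcond n d I F) := by
  set a := exp (-80) * ε * n / d
  set E := exp (-(ε ^ 2 * d / 8) * log (exp 1 * exp (-80) * ε * n / d))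
  have hd : (8 : ℝ) ≤ d := by exact_mod_cast hd8
  have hX : 1 ≤ ε ^ 2 * d / 8 := by
    have := (div_le_iff₀ (by positivity)).mp hε2
    linarith [le_max_left 8 (log d)]
  have hsub : gamma n d (exp (-80)) ε I ∩ Dcond n d I F ⊆
      (Icc 2 ⌊a⌋₊).biUnion fun k => gammak n d k ε I ∩ Dcond n d I F := by
    intro G hG
    obtain ⟨hGΓ, hGD⟩ := mem_inter.mp hG
    obtain ⟨hGreg, S, hSI, hS2, hSa, hGS⟩ := mem_filter.mp hGΓ
    exact mem_biUnion.mpr ⟨#S, mem_Icc.mpr ⟨hS2, Nat.le_floor hSa⟩,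
      mem_inter.mpr ⟨mem_filter.mpr ⟨hGreg, S, hSI, rfl, hGS⟩, hGD⟩⟩
  have hk : ∀ k ∈ Icc 2 ⌊a⌋₊,
      (#(gammak n d k ε I ∩ Dcond n d I F) : ℝ) ≤ E * exp (-(k : ℝ)) * #(Dcond n d I F) := by
    intro k hk
    obtain ⟨hk2, hka⟩ := mem_Icc.mp hk
    have hka : (k : ℝ) ≤ a := (Nat.le_floor_iff (by positivity)).mp hka
    refine (card_gammak_inter_le_exp hd8 hε0 hε1 hk2 hε2 hka hI).trans ?_
    have h3 : 3 * exp 1 * exp (-80) * ε * n / (k * d) = 3 * exp 1 * a / k := by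
      simp only [a]; field_simp
    have he : exp 1 * exp (-80) * ε * n / d = exp 1 * a := by simp only [a]; ring
    rw [h3, show ε ^ 2 * d * k / 8 = ε ^ 2 * d / 8 * k by ring]
    simp only [E, he]
    gcongr
    exact exp_neg_mul_log_le hX (by exact_mod_cast hk2) hka
  calc (#(gamma n d (exp (-80)) ε I ∩ Dcond n d I F) : ℝ)
      ≤ ∑ k ∈ Icc 2 ⌊a⌋₊, (#(gammak n d k ε I ∩ Dcond n d I F) : ℝ) := by
        exact_mod_cast (card_le_card hsub).trans card_biUnion_le
    _ ≤ ∑ k ∈ Icc 2 ⌊a⌋₊, E * exp (-(k : ℝ)) * #(Dcond n d I F) := sum_le_sum hk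
    _ = E * #(Dcond n d I F) * ∑ k ∈ Icc 2 ⌊a⌋₊, exp (-(k : ℝ)) := by
        rw [mul_sum]; exact sum_congr rfl fun k _ => by ring
    _ ≤ E * #(Dcond n d I F) :=
        mul_le_of_le_one_right (by positivity) (sum_Icc_exp_neg_le_one _)

end Expansion

end GraphSparse

/-- **Expansion property of random `d`-regular digraphs** (Theorem 2.2 of the paper). -/
theorem thm_graph_sparse :
    ∃ c : ℝ, 0 < c ∧
      ∀ (n d k : ℕ) (ε : ℝ) (I : Finset (Fin n)) (F : Finset (Fin n × Fin n)),
        8 ≤ d → d ≤ n → 0 < ε → ε < 1 → 2 ≤ k →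
        max 8 (Real.log d) / d ≤ ε ^ 2 →
        (k : ℝ) ≤ c * ε * n / d →
        (I.card : ℝ) ≤ n / 8 →
        (Dcond n d I F).Nonempty →
        (((((Dreg n d).filter fun G => ∃ S : Finset (Fin n), S ⊆ Iᶜ ∧ S.card = k ∧
              ((inNbr G S).card : ℝ) ≤ (1 - ε) * d * S.card) ∩ Dcond n d I F).card : ℝ) /
            ((Dcond n d I F).card : ℝ)
          ≤ Real.exp (-(ε ^ 2 * d * k / 8) *
              Real.log (3 * Real.exp 1 * c * ε * n / (k * d)))) ∧
        (((((Dreg n d).filter fun G => ∃ S : Finset (Fin n), S ⊆ Iᶜ ∧ 2 ≤ S.card ∧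
              (S.card : ℝ) ≤ c * ε * n / d ∧
              ((inNbr G S).card : ℝ) ≤ (1 - ε) * d * S.card) ∩ Dcond n d I F).card : ℝ) /
            ((Dcond n d I F).card : ℝ)
          ≤ Real.exp (-(ε ^ 2 * d / 8) * Real.log (Real.exp 1 * c * ε * n / d))) := by
  refine ⟨Real.exp (-80), Real.exp_pos _,
    fun n d k ε I F hd8 _ hε0 hε1 hk2 hε2 hkc hI hne => ?_⟩
  have hD : (0 : ℝ) < #(Dcond n d I F) := by exact_mod_cast hne.card_pos
  exact ⟨(div_le_iff₀ hD).mpr (GraphSparse.card_gammak_inter_le_exp hd8 hε0 hε1 hk2 hε2 hkc hI),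
    (div_le_iff₀ hD).mpr (GraphSparse.card_gamma_inter_le_exp hd8 hε0 hε1 hε2 hI)⟩
end

section
/- There exist absolute constants c > 0 and C, C₁ ≥ 1 such that the following holds. Let C₁ ≤ d ≤ n/24 and let natural numbers ℓ and r satisfy n/4 ≥ r ≥ ℓ ≥ C·n·ln(en/r)/d. Then the probability that there exist I, J ⊆ [n] with |I| ≥ ℓ and |J| ≥ r such that G has no edge from a vertex of I to a vertex of J (i.e., E_G(I,J) = ∅) is at most exp(−c·r·ℓ·d/n). -/
/-!
Fix `I, J` with `|I| = ℓ`, `|J| = r` and forbid the cells of `I × J` one at a time. If `(i, j)` is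
the next cell, switchings take a digraph avoiding the cells forbidden so far and without the edge
`i → j` to one with it: choose edges `i → b`, `a → j`, `x → y` and replace them by `i → j`,
`x → b`, `a → y`. As `6d, |I|, |J| ≤ n/4`, for each of the `d²` choices of `(b, a)` at least
`nd/4` edges `x → y` are admissible, while every digraph with the edge `i → j` arises from at most
`(nd)²` switchings. So forbidding one more cell multiplies the count by at most
`(1 + d/(4n))⁻¹ ≤ exp(-d/(8n))`, and `I × J` is empty of edges with probability at most
`exp(-ℓrd/(8n))`. The union bound over the `≤ (en/r)^{2r} = exp(2r ln(en/r))` pairs `(I, J)` costs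
at most `exp(ℓrd/(16n))` by the lower bound on `ℓ`.
-/

open Finset
open scoped Classical

lemma Nat.choose_le_choose_of_le_of_two_mul_le {n k m : ℕ} (hkm : k ≤ m) (hm : 2 * m ≤ n) :
    n.choose k ≤ n.choose m := by
  induction m, hkm using Nat.le_induction with
  | base => rfl
  | succ m _ ih => exact (ih (by omega)).trans (Nat.choose_le_succ_of_lt_half_left (by omega))

lemma Nat.choose_le_exp_one_mul_div_pow (n r : ℕ) :
    (n.choose r : ℝ) ≤ (Real.exp 1 * n / r) ^ r := by
  rcases Nat.eq_zero_or_pos r with rfl | hr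
  · simp
  calc (n.choose r : ℝ) ≤ (n : ℝ) ^ r / r.factorial := Nat.choose_le_pow_div r n
    _ = ((n : ℝ) / r) ^ r * ((r : ℝ) ^ r / r.factorial) := by
        rw [div_pow]; field_simp
    _ ≤ ((n : ℝ) / r) ^ r * Real.exp r := by
        gcongr
        exact Real.pow_div_factorial_le_exp _ (by positivity) r
    _ = (Real.exp 1 * n / r) ^ r := by
        rw [← Real.exp_one_pow, mul_div_assoc, mul_pow, mul_comm]

lemma pow_le_exp_mul_log {x : ℝ} (hx : 0 ≤ x) (r : ℕ) : x ^ r ≤ Real.exp (r * Real.log x) := by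
  rcases hx.eq_or_lt with rfl | hx
  · cases r <;> simp
  · rw [← Real.log_pow, Real.exp_log (by positivity)]

lemma Nat.choose_mul_choose_le_exp {n ℓ r : ℕ} (hℓr : ℓ ≤ r) (hr : 2 * r ≤ n) :
    (n.choose ℓ * n.choose r : ℝ) ≤ Real.exp (2 * r * Real.log (Real.exp 1 * n / r)) := by
  have hcr : (n.choose r : ℝ) ≤ Real.exp (r * Real.log (Real.exp 1 * n / r)) :=
    (Nat.choose_le_exp_one_mul_div_pow n r).trans (pow_le_exp_mul_log (by positivity) r)
  have hcℓ : (n.choose ℓ : ℝ) ≤ n.choose r :=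
    mod_cast choose_le_choose_of_le_of_two_mul_le hℓr hr
  rw [show 2 * (r : ℝ) = r + r by ring, add_mul, Real.exp_add]
  gcongr
  exact hcℓ.trans hcr

lemma inv_one_add_le_exp_neg_half {x : ℝ} (h0 : 0 ≤ x) (h1 : x ≤ 1) :
    (1 + x)⁻¹ ≤ Real.exp (-(x / 2)) := by
  rw [Real.exp_neg]
  refine inv_anti₀ (Real.exp_pos _)
    ((Real.exp_bound_div_one_sub_of_interval (by linarith) (by linarith)).trans ?_)
  rw [div_le_iff₀ (by linarith)]
  nlinarith

lemma Finset.card_insert_insert_union_le {α : Type*} [DecidableEq α] (u w : α) (s t : Finset α) :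
    #(insert u (insert w (s ∪ t))) ≤ #s + #t + 2 :=
  (card_insert_le _ _).trans <| Nat.add_le_add_right
    ((card_insert_le _ _).trans (Nat.add_le_add_right (card_union_le _ _) 1)) 1

lemma Finset.sum_card_le_sum_card_of_injective {α β τ : Type*} {s : Finset α} {t : Finset β}
    {F : α → Finset τ} {R : β → Finset τ} (f : α → τ → β)
    (hf : ∀ a ∈ s, ∀ x ∈ F a, f a x ∈ t ∧ x ∈ R (f a x))
    (hinj : ∀ x, Function.Injective (f · x)) :
    ∑ a ∈ s, #(F a) ≤ ∑ b ∈ t, #(R b) := by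
  rw [← card_sigma, ← card_sigma]
  refine card_le_card_of_injOn (fun p => ⟨f p.1 p.2, p.2⟩) (fun p hp => ?_) ?_
  · rw [mem_coe, mem_sigma] at hp ⊢
    exact hf _ hp.1 _ hp.2
  · rintro ⟨a, x⟩ - ⟨a', x'⟩ - h
    simp only [Sigma.mk.injEq, heq_eq_eq] at h
    obtain ⟨h₁, rfl⟩ := h
    rw [hinj x h₁]

namespace RegularDigraph

section Switching

variable {V : Type*} [DecidableEq V]

def toggle (G : V → V → Bool) (S : Finset (V × V)) : V → V → Bool :=
  fun u v => if (u, v) ∈ S then !G u v else G u v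

lemma toggle_injective (S : Finset (V × V)) :
    Function.Injective fun G : V → V → Bool => toggle G S := by
  refine Function.LeftInverse.injective (g := fun G => toggle G S) fun G => ?_
  funext u v
  by_cases h : (u, v) ∈ S <;> simp [toggle, h]

def switchCells (i j b a x y : V) : Finset (V × V) :=
  {(i, j), (i, b), (a, j), (a, y), (x, y), (x, b)}

structure IsSwitching (G : V → V → Bool) (i j b a x y : V) : Prop where
  ib : G i b = true
  aj : G a j = true
  xy : G x y = true
  ij : G i j = false
  xb : G x b = false
  ay : G a y = false
  x_ne_i : x ≠ i
  x_ne_a : x ≠ a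
  y_ne_j : y ≠ j
  y_ne_b : y ≠ b

namespace IsSwitching

variable {G : V → V → Bool} {i j b a x y : V} (h : IsSwitching G i j b a x y)
include h

lemma exists_perm_row (u : V) :
    ∃ σ : Equiv.Perm V, ∀ v, toggle G (switchCells i j b a x y) u v = G u (σ v) := by
  obtain ⟨hib, haj, hxy, hij, hxb, hay, hxi, hxa, hyj, hyb⟩ := h
  have hai : a ≠ i := by rintro rfl; simp_all
  have := hxi.symm; have := hxa.symm; have := hai.symm
  by_cases hui : u = i
  · refine ⟨Equiv.swap j b, fun v => ?_⟩
    by_cases hvj : v = j <;> by_cases hvb : v = b <;>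
      simp_all [toggle, switchCells, Equiv.swap_apply_of_ne_of_ne]
  by_cases hua : u = a
  · refine ⟨Equiv.swap j y, fun v => ?_⟩
    by_cases hvj : v = j <;> by_cases hvy : v = y <;>
      simp_all [toggle, switchCells, Equiv.swap_apply_of_ne_of_ne]
  by_cases hux : u = x
  · refine ⟨Equiv.swap y b, fun v => ?_⟩
    by_cases hvy : v = y <;> by_cases hvb : v = b <;>
      simp_all [toggle, switchCells, Equiv.swap_apply_of_ne_of_ne]
  · exact ⟨1, fun v => by simp_all [toggle, switchCells]⟩

lemma exists_perm_col (v : V) :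
    ∃ σ : Equiv.Perm V, ∀ u, toggle G (switchCells i j b a x y) u v = G (σ u) v := by
  obtain ⟨hib, haj, hxy, hij, hxb, hay, hxi, hxa, hyj, hyb⟩ := h
  have hbj : b ≠ j := by rintro rfl; simp_all
  have := hyj.symm; have := hyb.symm; have := hbj.symm
  by_cases hvj : v = j
  · refine ⟨Equiv.swap i a, fun u => ?_⟩
    by_cases hui : u = i <;> by_cases hua : u = a <;>
      simp_all [toggle, switchCells, Equiv.swap_apply_of_ne_of_ne]
  by_cases hvb : v = b
  · refine ⟨Equiv.swap i x, fun u => ?_⟩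
    by_cases hui : u = i <;> by_cases hux : u = x <;>
      simp_all [toggle, switchCells, Equiv.swap_apply_of_ne_of_ne]
  by_cases hvy : v = y
  · refine ⟨Equiv.swap a x, fun u => ?_⟩
    by_cases hua : u = a <;> by_cases hux : u = x <;>
      simp_all [toggle, switchCells, Equiv.swap_apply_of_ne_of_ne]
  · exact ⟨1, fun u => by simp_all [toggle, switchCells]⟩

lemma toggle_apply_reverse :
    toggle G (switchCells i j b a x y) i j = true ∧ toggle G (switchCells i j b a x y) x b = true ∧
      toggle G (switchCells i j b a x y) a y = true := by
  simp [toggle, switchCells, h.ij, h.xb, h.ay]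

lemma toggle_avoids {Q : Finset (V × V)} (hQ : ∀ p ∈ Q, G p.1 p.2 = false)
    (hij : (i, j) ∉ Q) (hxb : (x, b) ∉ Q) (hay : (a, y) ∉ Q) :
    ∀ p ∈ Q, toggle G (switchCells i j b a x y) p.1 p.2 = false := by
  intro p hp
  have hcell : p ∉ switchCells i j b a x y := by
    intro hc
    simp only [switchCells, mem_insert, mem_singleton] at hc
    rcases hc with rfl | rfl | rfl | rfl | rfl | rfl
    · exact hij hp
    · simpa [h.ib] using hQ _ hp
    · simpa [h.aj] using hQ _ hp
    · exact hay hp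
    · simpa [h.xy] using hQ _ hp
    · exact hxb hp
  simp [toggle, hcell, hQ p hp]

end IsSwitching

end Switching

section Counting

variable {V : Type*} [Fintype V] [DecidableEq V] {G H : V → V → Bool} {d : ℕ}

def outNbrs (G : V → V → Bool) (i : V) : Finset V := univ.filter fun j => G i j = true

def inNbrs (G : V → V → Bool) (j : V) : Finset V := univ.filter fun i => G i j = true

def IsRegular (G : V → V → Bool) (d : ℕ) : Prop :=
  (∀ i, #(outNbrs G i) = d) ∧ ∀ j, #(inNbrs G j) = d

lemma mem_Dreg {n d : ℕ} {G : Fin n → Fin n → Bool} : G ∈ Dreg n d ↔ IsRegular G d := by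
  simp [Dreg, IsRegular, outNbrs, inNbrs]

omit [DecidableEq V] in
lemma card_filter_comp_perm (f : V → Bool) (σ : Equiv.Perm V) :
    #(univ.filter fun v => f (σ v) = true) = #(univ.filter fun v => f v = true) :=
  card_equiv σ (by simp)

lemma IsRegular.toggle_switchCells (hG : IsRegular G d) {i j b a x y : V}
    (h : IsSwitching G i j b a x y) : IsRegular (toggle G (switchCells i j b a x y)) d := by
  constructor
  · intro u
    obtain ⟨σ, hσ⟩ := h.exists_perm_row u
    simp only [outNbrs, hσ, card_filter_comp_perm (G u) σ]
    exact hG.1 u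
  · intro v
    obtain ⟨σ, hσ⟩ := h.exists_perm_col v
    simp only [inNbrs, hσ, card_filter_comp_perm (G · v) σ]
    exact hG.2 v

omit [DecidableEq V] in
lemma IsRegular.card_edges_fst_mem (hG : IsRegular G d) (K : Finset V) :
    #((K ×ˢ univ).filter fun p => G p.1 p.2 = true) = #K * d := by
  rw [card_filter, sum_product, ← smul_eq_mul, ← sum_const]
  refine sum_congr rfl fun u _ => ?_
  rw [← hG.1 u, outNbrs, card_filter]

omit [DecidableEq V] in
lemma IsRegular.card_edges_snd_mem (hG : IsRegular G d) (K : Finset V) :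
    #((univ ×ˢ K).filter fun p => G p.1 p.2 = true) = #K * d := by
  rw [card_filter, sum_product_right, ← smul_eq_mul, ← sum_const]
  refine sum_congr rfl fun v _ => ?_
  rw [← hG.2 v, inNbrs, card_filter]

lemma IsRegular.card_mul_le (hG : IsRegular G d) (K K' : Finset V) :
    Fintype.card V * d ≤
      #K * d + #K' * d + #((Kᶜ ×ˢ K'ᶜ).filter fun p => G p.1 p.2 = true) := by
  rw [← hG.card_edges_fst_mem K, ← hG.card_edges_snd_mem K', ← card_univ,
    ← hG.card_edges_fst_mem univ]
  refine (card_le_card fun p hp => ?_).trans ((card_union_le _ _).trans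
    (Nat.add_le_add_right (card_union_le _ _) _))
  by_cases h1 : p.1 ∈ K <;> by_cases h2 : p.2 ∈ K' <;> simp_all

def switchTargets (G : V → V → Bool) (I J : Finset V) (i j b a : V) : Finset (V × V) :=
  ((insert i (insert a (inNbrs G b ∪ I)))ᶜ ×ˢ (insert j (insert b (outNbrs G a ∪ J)))ᶜ).filter
    fun p => G p.1 p.2 = true

lemma IsRegular.card_mul_le_card_switchTargets (hG : IsRegular G d) (hd : 1 ≤ d)
    (hn : 24 * d ≤ Fintype.card V) {I J : Finset V} (hI : 4 * #I ≤ Fintype.card V)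
    (hJ : 4 * #J ≤ Fintype.card V) (i j b a : V) :
    Fintype.card V * d ≤ 4 * #(switchTargets G I J i j b a) := by
  have hcover := hG.card_mul_le (insert i (insert a (inNbrs G b ∪ I)))
    (insert j (insert b (outNbrs G a ∪ J)))
  have hrow := card_insert_insert_union_le i a (inNbrs G b) I
  have hcol := card_insert_insert_union_le j b (outNbrs G a) J
  rw [hG.2 b] at hrow
  rw [hG.1 a] at hcol
  have := Nat.mul_le_mul_right d hrow
  have := Nat.mul_le_mul_right d hcol
  have := Nat.mul_le_mul_right d hI
  have := Nat.mul_le_mul_right d hJ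
  have := Nat.mul_le_mul_right d hn
  unfold switchTargets
  nlinarith

def switchings (G : V → V → Bool) (I J : Finset V) (i j : V) : Finset (Σ _ : V × V, V × V) :=
  (outNbrs G i ×ˢ inNbrs G j).sigma fun ba => switchTargets G I J i j ba.1 ba.2

lemma IsRegular.card_mul_le_card_switchings (hG : IsRegular G d) (hd : 1 ≤ d)
    (hn : 24 * d ≤ Fintype.card V) {I J : Finset V} (hI : 4 * #I ≤ Fintype.card V)
    (hJ : 4 * #J ≤ Fintype.card V) (i j : V) :
    d * d * (Fintype.card V * d) ≤ 4 * #(switchings G I J i j) := by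
  rw [switchings, card_sigma, mul_sum]
  calc d * d * (Fintype.card V * d)
      = ∑ _ ∈ outNbrs G i ×ˢ inNbrs G j, Fintype.card V * d := by
        rw [sum_const, card_product, hG.1 i, hG.2 j, smul_eq_mul]
    _ ≤ _ := sum_le_sum fun ba _ =>
        hG.card_mul_le_card_switchTargets hd hn hI hJ i j ba.1 ba.2

lemma isSwitching_of_mem_switchings {I J : Finset V} {i j : V} (hij : G i j = false)
    {t : Σ _ : V × V, V × V} (ht : t ∈ switchings G I J i j) :
    IsSwitching G i j t.1.1 t.1.2 t.2.1 t.2.2 ∧ t.2.1 ∉ I ∧ t.2.2 ∉ J := by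
  obtain ⟨⟨b, a⟩, ⟨x, y⟩⟩ := t
  simp only [switchings, switchTargets, outNbrs, inNbrs, mem_sigma, mem_product, mem_filter,
    mem_compl, mem_insert, mem_union, mem_univ, true_and, not_or] at ht
  obtain ⟨⟨hib, haj⟩, ⟨⟨hxi, hxa, hxb, hxI⟩, hyj, hyb, hay, hyJ⟩, hxy⟩ := ht
  exact ⟨⟨hib, haj, hxy, hij, by simpa using hxb, by simpa using hay, hxi, hxa, hyj, hyb⟩,
    hxI, hyJ⟩

def reverseSwitchings (H : V → V → Bool) : Finset (Σ _ : V × V, V × V) :=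
  univ.filter fun t => H t.2.1 t.1.1 = true ∧ H t.1.2 t.2.2 = true

omit [DecidableEq V] in
lemma IsRegular.card_reverseSwitchings_le (hH : IsRegular H d) :
    #(reverseSwitchings H) ≤ (Fintype.card V * d) * (Fintype.card V * d) := by
  have hE := hH.card_edges_fst_mem univ
  rw [card_univ] at hE
  rw [← hE, ← card_product]
  refine card_le_card_of_injOn (fun t => ((t.2.1, t.1.1), (t.1.2, t.2.2))) (fun t ht => ?_) ?_
  · simp_all [reverseSwitchings]
  · rintro ⟨⟨b, a⟩, ⟨x, y⟩⟩ - ⟨⟨b', a'⟩, ⟨x', y'⟩⟩ - h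
    simp_all

end Counting

variable {n d : ℕ}

def avoiding (n d : ℕ) (Q : Finset (Fin n × Fin n)) : Finset (Fin n → Fin n → Bool) :=
  (Dreg n d).filter fun G => ∀ p ∈ Q, G p.1 p.2 = false

lemma toggle_switchCells_mem {I J : Finset (Fin n)} {Q : Finset (Fin n × Fin n)}
    (hQ : Q ⊆ I ×ˢ J) {i j : Fin n} (hijQ : (i, j) ∉ Q) {G : Fin n → Fin n → Bool}
    (hG : G ∈ avoiding n d (insert (i, j) Q)) {t : Σ _ : Fin n × Fin n, Fin n × Fin n}
    (ht : t ∈ switchings G I J i j) :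
    toggle G (switchCells i j t.1.1 t.1.2 t.2.1 t.2.2) ∈
        (avoiding n d Q).filter (fun H => H i j = true) ∧
      t ∈ reverseSwitchings (toggle G (switchCells i j t.1.1 t.1.2 t.2.1 t.2.2)) := by
  simp only [avoiding, mem_filter, forall_mem_insert, mem_Dreg] at hG
  obtain ⟨hreg, hGij, hGQ⟩ := hG
  obtain ⟨hsw, hxI, hyJ⟩ := isSwitching_of_mem_switchings hGij ht
  obtain ⟨hij', hxb', hay'⟩ := hsw.toggle_apply_reverse
  refine ⟨?_, by simp [reverseSwitchings, hxb', hay']⟩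
  simp only [avoiding, mem_filter, mem_Dreg]
  refine ⟨⟨hreg.toggle_switchCells hsw, hsw.toggle_avoids hGQ hijQ ?_ ?_⟩, hij'⟩
  · exact fun h => hxI (mem_product.1 (hQ h)).1
  · exact fun h => hyJ (mem_product.1 (hQ h)).2

lemma mul_card_avoiding_insert_le (hd : 1 ≤ d) (hn : 24 * d ≤ n)
    {I J : Finset (Fin n)} (hI : 4 * #I ≤ n) (hJ : 4 * #J ≤ n)
    {Q : Finset (Fin n × Fin n)} (hQ : Q ⊆ I ×ˢ J) {i j : Fin n} (hijQ : (i, j) ∉ Q) :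
    d * #(avoiding n d (insert (i, j) Q)) ≤
      4 * n * #((avoiding n d Q).filter fun G => G i j = true) := by
  set Ω₀ := avoiding n d (insert (i, j) Q)
  set Ω₁ := (avoiding n d Q).filter fun G => G i j = true
  have hcardV : Fintype.card (Fin n) = n := Fintype.card_fin n
  have hswitch : ∑ G ∈ Ω₀, #(switchings G I J i j) ≤ ∑ H ∈ Ω₁, #(reverseSwitchings H) :=
    sum_card_le_sum_card_of_injective _ (fun G hG t ht => toggle_switchCells_mem hQ hijQ hG ht)
      (fun t => toggle_injective _)
  have hforward : #Ω₀ * (d * d * (n * d)) ≤ 4 * ∑ G ∈ Ω₀, #(switchings G I J i j) := by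
    rw [mul_sum, ← smul_eq_mul, ← sum_const]
    refine sum_le_sum fun G hG => ?_
    have hreg : IsRegular G d := mem_Dreg.1 (mem_filter.1 hG).1
    simpa [hcardV] using hreg.card_mul_le_card_switchings hd (by rwa [hcardV])
      (by rwa [hcardV]) (by rwa [hcardV]) i j
  have hreverse : ∑ H ∈ Ω₁, #(reverseSwitchings H) ≤ #Ω₁ * ((n * d) * (n * d)) := by
    rw [← smul_eq_mul, ← sum_const]
    refine sum_le_sum fun H hH => ?_
    have hreg : IsRegular H d := mem_Dreg.1 (mem_filter.1 (mem_filter.1 hH).1).1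
    simpa [hcardV] using hreg.card_reverseSwitchings_le
  have hpos : 0 < n * (d * d) := Nat.mul_pos (by omega) (Nat.mul_pos hd hd)
  refine Nat.le_of_mul_le_mul_right ?_ hpos
  calc d * #Ω₀ * (n * (d * d)) = #Ω₀ * (d * d * (n * d)) := by ring
    _ ≤ 4 * (#Ω₁ * ((n * d) * (n * d))) := hforward.trans (by gcongr; exact hswitch.trans hreverse)
    _ = 4 * n * #Ω₁ * (n * (d * d)) := by ring

lemma avoiding_insert (Q : Finset (Fin n × Fin n)) (i j : Fin n) :
    avoiding n d (insert (i, j) Q) = (avoiding n d Q).filter fun G => ¬G i j = true := by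
  ext G
  simp only [avoiding, mem_filter, forall_mem_insert, Bool.not_eq_true]
  tauto

lemma card_avoiding_insert_le (hd : 1 ≤ d) (hn : 24 * d ≤ n)
    {I J : Finset (Fin n)} (hI : 4 * #I ≤ n) (hJ : 4 * #J ≤ n)
    {Q : Finset (Fin n × Fin n)} (hQ : Q ⊆ I ×ˢ J) {i j : Fin n} (hijQ : (i, j) ∉ Q) :
    (#(avoiding n d (insert (i, j) Q)) : ℝ) ≤
      Real.exp (-(d / (8 * n))) * #(avoiding n d Q) := by
  have hswitch := mul_card_avoiding_insert_le hd hn hI hJ hQ hijQ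
  have hsplit := card_filter_add_card_filter_not (s := avoiding n d Q)
    (fun G => G i j = true)
  rw [← avoiding_insert] at hsplit
  set A := #(avoiding n d (insert (i, j) Q))
  set B := #((avoiding n d Q).filter fun G => G i j = true)
  have hnR : (0 : ℝ) < n := by norm_cast; omega
  have hdn : (d : ℝ) ≤ 4 * n := by norm_cast; omega
  set x : ℝ := d / (4 * n)
  have hx0 : 0 ≤ x := by positivity
  have hx1 : x ≤ 1 := (div_le_one (by positivity)).2 hdn
  have hAB : (A : ℝ) * (1 + x) ≤ A + B := by
    have : (d : ℝ) * A ≤ 4 * n * B := by exact_mod_cast hswitch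
    have : (A : ℝ) * x ≤ B := by
      rw [← mul_div_assoc, div_le_iff₀ (by positivity)]
      linarith
    linarith
  calc (A : ℝ) ≤ (1 + x)⁻¹ * (A + B) := by
        rw [inv_mul_eq_div, le_div_iff₀ (by positivity)]
        exact hAB
    _ ≤ Real.exp (-(x / 2)) * (A + B) :=
        mul_le_mul_of_nonneg_right (inv_one_add_le_exp_neg_half hx0 hx1) (by positivity)
    _ = Real.exp (-(d / (8 * n))) * #(avoiding n d Q) := by
        rw [← hsplit, Nat.cast_add, add_comm (B : ℝ)]
        congr 2
        ring

lemma card_avoiding_le (hd : 1 ≤ d) (hn : 24 * d ≤ n)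
    {I J : Finset (Fin n)} (hI : 4 * #I ≤ n) (hJ : 4 * #J ≤ n)
    {Q : Finset (Fin n × Fin n)} (hQ : Q ⊆ I ×ˢ J) :
    (#(avoiding n d Q) : ℝ) ≤ Real.exp (-(#Q * d / (8 * n))) * #(Dreg n d) := by
  induction Q using Finset.induction_on with
  | empty => simp [avoiding]
  | @insert p Q hpQ ih =>
    have hQ' : Q ⊆ I ×ˢ J := (subset_insert p Q).trans hQ
    calc (#(avoiding n d (insert p Q)) : ℝ)
        ≤ Real.exp (-(d / (8 * n))) * #(avoiding n d Q) :=
          card_avoiding_insert_le hd hn hI hJ hQ' hpQ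
      _ ≤ Real.exp (-(d / (8 * n))) * (Real.exp (-(#Q * d / (8 * n))) * #(Dreg n d)) := by
          gcongr
          exact ih hQ'
      _ = Real.exp (-(#(insert p Q) * d / (8 * n))) * #(Dreg n d) := by
          rw [← mul_assoc, ← Real.exp_add, card_insert_of_notMem hpQ]
          push_cast
          ring_nf

lemma card_filter_exists_avoiding_le (hd : 1 ≤ d) (hn : 24 * d ≤ n) {ℓ r : ℕ}
    (hℓ : 4 * ℓ ≤ n) (hr : 4 * r ≤ n) :
    (#((Dreg n d).filter fun G => ∃ I J : Finset (Fin n), ℓ ≤ #I ∧ r ≤ #J ∧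
        ∀ i ∈ I, ∀ j ∈ J, G i j = false) : ℝ) ≤
      n.choose ℓ * n.choose r * (Real.exp (-(ℓ * r * d / (8 * n))) * #(Dreg n d)) := by
  set P := powersetCard ℓ (univ : Finset (Fin n)) ×ˢ powersetCard r (univ : Finset (Fin n))
  have hcover : ((Dreg n d).filter fun G => ∃ I J : Finset (Fin n), ℓ ≤ #I ∧ r ≤ #J ∧
      ∀ i ∈ I, ∀ j ∈ J, G i j = false) ⊆ P.biUnion fun IJ => avoiding n d (IJ.1 ×ˢ IJ.2) := by
    intro G hG
    obtain ⟨hGD, I, J, hI, hJ, hIJ⟩ := mem_filter.1 hG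
    obtain ⟨I₀, hI₀, rfl⟩ := exists_subset_card_eq hI
    obtain ⟨J₀, hJ₀, rfl⟩ := exists_subset_card_eq hJ
    refine mem_biUnion.2 ⟨(I₀, J₀), by simp [P], mem_filter.2 ⟨hGD, fun p hp => ?_⟩⟩
    exact hIJ _ (hI₀ (mem_product.1 hp).1) _ (hJ₀ (mem_product.1 hp).2)
  have hterm : ∀ IJ ∈ P, (#(avoiding n d (IJ.1 ×ˢ IJ.2)) : ℝ) ≤
      Real.exp (-(ℓ * r * d / (8 * n))) * #(Dreg n d) := by
    intro IJ hIJ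
    obtain ⟨⟨-, hI⟩, ⟨-, hJ⟩⟩ := mem_product.1 hIJ |>.imp mem_powersetCard.1 mem_powersetCard.1
    have := card_avoiding_le hd hn (by omega) (by omega) (subset_refl (IJ.1 ×ˢ IJ.2))
    rwa [card_product, hI, hJ, Nat.cast_mul] at this
  calc (#((Dreg n d).filter _) : ℝ) ≤ ∑ IJ ∈ P, (#(avoiding n d (IJ.1 ×ˢ IJ.2)) : ℝ) := by
        exact_mod_cast (card_le_card hcover).trans card_biUnion_le
    _ ≤ #P * (Real.exp (-(ℓ * r * d / (8 * n))) * #(Dreg n d)) := by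
        simpa using sum_le_card_nsmul P _ _ hterm
    _ = _ := by simp [P]

end RegularDigraph

/-- **Edges between large vertex subsets** (Theorem 2.6 of the paper): with high
probability, for all `I, J` with `|I| ≥ ℓ`, `|J| ≥ r` there is an edge from `I` to `J`. -/
theorem thm_graph_spread :
    ∃ c C C₁ : ℝ, 0 < c ∧ 1 ≤ C ∧ 1 ≤ C₁ ∧
      ∀ (n d ℓ r : ℕ),
        C₁ ≤ (d : ℝ) → (d : ℝ) ≤ n / 24 →
        (r : ℝ) ≤ n / 4 → ℓ ≤ r →
        C * n * Real.log (Real.exp 1 * n / r) / d ≤ (ℓ : ℝ) →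
        (((Dreg n d).filter fun G =>
            ∃ I J : Finset (Fin n), ℓ ≤ I.card ∧ r ≤ J.card ∧
              ∀ i ∈ I, ∀ j ∈ J, G i j = false).card : ℝ) / ((Dreg n d).card : ℝ)
          ≤ Real.exp (-(c * r * ℓ * d / n)) := by
  refine ⟨1 / 16, 32, 1, by norm_num, by norm_num, le_rfl, ?_⟩
  intro n d ℓ r hd hdn hrn hℓr hℓ
  have hd1 : 1 ≤ d := by exact_mod_cast hd
  have hn : 24 * d ≤ n := by exact_mod_cast (show ((24 * d : ℕ) : ℝ) ≤ n by push_cast; linarith)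
  have hr : 4 * r ≤ n := by exact_mod_cast (show ((4 * r : ℕ) : ℝ) ≤ n by push_cast; linarith)
  have hnR : (0 : ℝ) < n := by norm_cast; omega
  set L := Real.log (Real.exp 1 * n / r)
  have hL : 2 * r * L ≤ ℓ * r * d / (16 * n) := by
    have : 32 * n * L ≤ ℓ * d := by rwa [div_le_iff₀ (by positivity)] at hℓ
    rw [le_div_iff₀ (by positivity)]
    nlinarith [(Nat.cast_nonneg r : (0 : ℝ) ≤ r)]
  refine div_le_of_le_mul₀ (by positivity) (by positivity)
    ((RegularDigraph.card_filter_exists_avoiding_le hd1 hn (by omega) hr).trans ?_)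
  calc (n.choose ℓ * n.choose r : ℝ) * (Real.exp (-(ℓ * r * d / (8 * n))) * #(Dreg n d))
      ≤ Real.exp (2 * r * L) * (Real.exp (-(ℓ * r * d / (8 * n))) * #(Dreg n d)) := by
        gcongr
        exact Nat.choose_mul_choose_le_exp hℓr (by omega)
    _ ≤ Real.exp (-(1 / 16 * r * ℓ * d / n)) * #(Dreg n d) := by
        rw [← mul_assoc, ← Real.exp_add]
        gcongr
        rw [show -(1 / 16 * r * ℓ * d / n : ℝ) = ℓ * r * d / (16 * n) - ℓ * r * d / (8 * n) by
          field_simp; ring]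
        linarith
end

section
/- Let δ ∈ (0,1), 2 ≤ d ≤ n/12, 1 ≤ k ≤ δ·n/(4ed), and let F, H ⊆ [n]×[n]. Then for every I ⊆ [n] with I ∩ [k+d] = ∅ and |I| ≤ n/8, one has |Γ([k], {k+1}, δ) ∩ D([k],F) ∩ D(I,H)| ≤ γ_k · |D([k],F) ∩ D(I,H)|, where γ_k = (2ekd/(δn))^{δd}. -/
open Finset
open scoped Classical

/-- `GammaSet n d δ S J`: graphs in which every `j ∈ J` has at least `δ d` common
in-neighbors with the set of vertices of `S` preceding `j`, i.e.
`|⋃_{i ∈ S, i < j} C^in_G(i,j)| ≥ δ d`. -/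
noncomputable def GammaSet (n d : ℕ) (δ : ℝ) (S J : Finset (Fin n)) : Finset (Fin n → Fin n → Bool) :=
  (Dreg n d).filter fun G => ∀ j ∈ J,
    δ * d ≤ ((Finset.univ.filter fun v : Fin n =>
      ∃ i ∈ S, i < j ∧ G v i = true ∧ G v j = true).card : ℝ)

/-- The initial segment `[k] = {1, …, k}` of the vertex set, in `0`-indexed form the
set of vertices with value `< k`. -/
def seg (n k : ℕ) : Finset (Fin n) := Finset.univ.filter fun i => (i : ℕ) < k

/-!
Switching argument. Once the in-edges `F` of `[k]` are fixed, the set `T = F.image Prod.fst` of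
in-neighbours of `[k]` is the same for every conditioned graph, and the common in-neighbours of
the vertex `k` with `[k]` are exactly its in-neighbours in `T`. Let `L m` be the conditioned
graphs in which `k` has at least `m` in-neighbours in `T`. Trading an edge `(v,k)`, `v ∈ T`, and
an edge `(w,z)` avoiding `T`, `N⁻(k)`, `N⁺(v)`, `[k]`, `I` and `k` for `(w,k)`, `(v,z)` keeps
the graph regular and conditioned, and maps `L (m+1)` into `L m`. For each of the `m+1` choices
of `v` at least `Y ≥ nd/2` edges `(w,z)` qualify, while a graph of `L m` arises from at most
`|T| d² ≤ kd³` switchings, so `|L (m+1)| ≤ kd³/((m+1) Y) |L m|`. Iterating up to `m = ⌈δd⌉`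
and using `m! ≥ (m/e)^m` gives the factor `(2ekd/(δn))^{δd}`.
-/

open scoped Nat

section DoubleCounting

variable {α β γ : Type*}

theorem card_filter_prod_eq_sum [Fintype α] [Fintype β] (P : α × β → Prop)
    [DecidablePred P] : #{p | P p} = ∑ a, #{b | P (a, b)} := by
  simp only [card_filter, Fintype.sum_prod_type]

theorem card_filter_and_fst_mem [Fintype α] [Fintype β] [DecidableEq α] (P : α → β → Prop)
    [∀ a b, Decidable (P a b)] (S : Finset α) :
    #{p : α × β | P p.1 p.2 ∧ p.1 ∈ S} = ∑ a ∈ S, #{b | P a b} := by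
  simp only [card_filter, Fintype.sum_prod_type, and_comm (a := P _ _), ite_and,
    sum_ite_irrel, sum_const_zero, sum_ite_mem, univ_inter]

theorem card_filter_and_snd_mem [Fintype α] [Fintype β] [DecidableEq β] (P : α → β → Prop)
    [∀ a b, Decidable (P a b)] (S : Finset β) :
    #{p : α × β | P p.1 p.2 ∧ p.2 ∈ S} = ∑ b ∈ S, #{a | P a b} := by
  simp only [card_filter, Fintype.sum_prod_type_right, and_comm (a := P _ _), ite_and,
    sum_ite_irrel, sum_const_zero, sum_ite_mem, univ_inter]

theorem card_mul_le_card_mul_of_switching [Fintype γ] {s : Finset α} {t : Finset β}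
    {P : α → γ → Prop} {Q : β → γ → Prop} [∀ x, DecidablePred (P x)]
    [∀ y, DecidablePred (Q y)] {f : α → γ → β} {a b : ℕ}
    (hP : ∀ x ∈ s, a ≤ #{c | P x c}) (hQ : ∀ y ∈ t, #{c | Q y c} ≤ b)
    (hf : ∀ x ∈ s, ∀ c, P x c → f x c ∈ t ∧ Q (f x c) c)
    (hinj : ∀ c, Set.InjOn (f · c) {x | x ∈ s ∧ P x c}) :
    #s * a ≤ #t * b := by
  calc #s * a ≤ ∑ x ∈ s, #{c | P x c} := by
        simpa [mul_comm] using card_nsmul_le_sum s _ a hP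
    _ = ∑ c, #{x ∈ s | P x c} :=
        sum_card_bipartiteAbove_eq_sum_card_bipartiteBelow (t := univ) P
    _ ≤ ∑ c, #{y ∈ t | Q y c} := sum_le_sum fun c _ =>
        card_le_card_of_injOn (f · c)
          (fun x hx => by
            obtain ⟨hxs, hPx⟩ := mem_filter.1 hx
            exact mem_filter.2 (hf x hxs c hPx))
          (by simpa using hinj c)
    _ = ∑ y ∈ t, #{c | Q y c} :=
        (sum_card_bipartiteAbove_eq_sum_card_bipartiteBelow (t := univ) Q).symm
    _ ≤ #t * b := by simpa [mul_comm] using sum_le_card_nsmul t _ b hQ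

end DoubleCounting

theorem factorial_mul_pow_mul_le_mul_pow {a : ℕ → ℕ} {Y K : ℕ}
    (h : ∀ m, a (m + 1) * ((m + 1) * Y) ≤ a m * K) (m : ℕ) :
    a m * (m ! * Y ^ m) ≤ a 0 * K ^ m := by
  induction m with
  | zero => simp
  | succ m ih =>
    calc a (m + 1) * ((m + 1) ! * Y ^ (m + 1))
        = a (m + 1) * ((m + 1) * Y) * (m ! * Y ^ m) := by
          rw [Nat.factorial_succ, pow_succ]; ring
      _ ≤ a m * K * (m ! * Y ^ m) := Nat.mul_le_mul_right _ (h m)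
      _ = a m * (m ! * Y ^ m) * K := by ring
      _ ≤ a 0 * K ^ m * K := Nat.mul_le_mul_right _ ih
      _ = a 0 * K ^ (m + 1) := by ring

open Real in
theorem pow_div_factorial_le_rpow {r a : ℝ} {m : ℕ} (hr : 0 ≤ r) (ha : 0 < a) (ham : a ≤ m)
    (hle : r * exp 1 / a ≤ 1) : r ^ m / m ! ≤ (r * exp 1 / a) ^ a := by
  have hm : (0 : ℝ) < m := ha.trans_le ham
  calc r ^ m / m ! = r ^ m * (1 / m !) := by ring
    _ ≤ r ^ m * (exp 1 ^ m / (m : ℝ) ^ m) := by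
        refine mul_le_mul_of_nonneg_left ?_ (by positivity)
        have h := pow_div_factorial_le_exp m hm.le m
        rw [div_le_iff₀ (by positivity)] at h
        rw [div_le_div_iff₀ (by positivity) (by positivity), one_mul, ← exp_nat_mul, mul_one]
        linarith
    _ = (r * exp 1 / m) ^ m := by rw [mul_div_assoc, mul_pow, div_pow]
    _ ≤ (r * exp 1 / a) ^ m := by gcongr
    _ = (r * exp 1 / a) ^ (m : ℝ) := (rpow_natCast _ m).symm
    _ ≤ (r * exp 1 / a) ^ a :=
        rpow_le_rpow_of_exponent_ge' (by positivity) hle ha.le ham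

section Switch

variable {V : Type*} [DecidableEq V]

def switch (G : V → V → Bool) (v w j z : V) : V → V → Bool := fun a b =>
  if a = v ∧ b = j ∨ a = w ∧ b = z then false
  else if a = w ∧ b = j ∨ a = v ∧ b = z then true
  else G a b

variable {G : V → V → Bool} {v w j z : V}

theorem switch_apply_of_ne_of_ne {a b : V} (hbj : b ≠ j) (hbz : b ≠ z) :
    switch G v w j z a b = G a b := by
  simp [switch, hbj, hbz]

theorem switch_apply_wj (hvw : v ≠ w) (hjz : j ≠ z) : switch G v w j z w j = true := by
  simp [switch, hvw.symm, hjz]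

theorem switch_apply_vz (hvw : v ≠ w) (hjz : j ≠ z) : switch G v w j z v z = true := by
  simp [switch, hvw, hjz.symm]

theorem switch_switch (hvj : G v j = true) (hwz : G w z = true) (hwj : G w j = false)
    (hvz : G v z = false) : switch (switch G v w j z) w v j z = G := by
  funext a b
  simp only [switch]
  by_cases hav : a = v <;> by_cases haw : a = w <;>
    by_cases hbj : b = j <;> by_cases hbz : b = z <;> simp_all

theorem card_filter_eq_of_swap [Fintype V] {f g : V → Bool} {x y : V} (hx : f x = true)
    (hy : f y = false)
    (hg : ∀ a, g a = if a = x then false else if a = y then true else f a) :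
    #{a | g a = true} = #{a | f a = true} := by
  have hset : ({a | g a = true} : Finset V) =
      insert y (({a | f a = true} : Finset V).erase x) := by
    ext a
    by_cases hax : a = x <;> by_cases hay : a = y <;> simp_all
  rw [hset, card_insert_of_notMem (by simp [hy]), card_erase_add_one (by simp [hx])]

end Switch

section Regular

variable {n d : ℕ} {G : Fin n → Fin n → Bool}

theorem card_in_of_mem_Dreg (hG : G ∈ Dreg n d) (b : Fin n) : #{a | G a b = true} = d :=
  (mem_filter.1 hG).2.2 b

theorem card_out_of_mem_Dreg (hG : G ∈ Dreg n d) (a : Fin n) : #{b | G a b = true} = d :=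
  (mem_filter.1 hG).2.1 a

theorem card_inEdges_of_mem_Dreg (hG : G ∈ Dreg n d) (S : Finset (Fin n)) :
    #{p : Fin n × Fin n | G p.1 p.2 = true ∧ p.2 ∈ S} = #S * d := by
  rw [card_filter_and_snd_mem (G · · = true), sum_congr rfl fun b _ => card_in_of_mem_Dreg hG b,
    sum_const, smul_eq_mul]

theorem card_outEdges_of_mem_Dreg (hG : G ∈ Dreg n d) (S : Finset (Fin n)) :
    #{p : Fin n × Fin n | G p.1 p.2 = true ∧ p.1 ∈ S} = #S * d := by
  rw [card_filter_and_fst_mem (G · · = true), sum_congr rfl fun a _ => card_out_of_mem_Dreg hG a,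
    sum_const, smul_eq_mul]

theorem switch_mem_Dreg {v w j z : Fin n} (hG : G ∈ Dreg n d) (hvw : v ≠ w) (hjz : j ≠ z)
    (hvj : G v j = true) (hwz : G w z = true) (hwj : G w j = false) (hvz : G v z = false) :
    switch G v w j z ∈ Dreg n d := by
  refine mem_filter.2 ⟨mem_univ _, fun a => ?_, fun b => ?_⟩
  · by_cases hav : a = v
    · subst hav
      exact (card_filter_eq_of_swap hvj hvz fun b => by simp [switch, hvw]).trans
        (card_out_of_mem_Dreg hG a)
    by_cases haw : a = w
    · subst haw
      exact (card_filter_eq_of_swap hwz hwj fun b => by simp [switch, hvw.symm]).trans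
        (card_out_of_mem_Dreg hG a)
    simpa [switch, hav, haw] using card_out_of_mem_Dreg hG a
  · by_cases hbj : b = j
    · subst hbj
      exact (card_filter_eq_of_swap (f := (G · b)) hvj hwj fun a => by simp [switch, hjz]).trans
        (card_in_of_mem_Dreg hG b)
    by_cases hbz : b = z
    · subst hbz
      exact (card_filter_eq_of_swap (f := (G · b)) hwz hvz fun a => by simp [switch, hbj]).trans
        (card_in_of_mem_Dreg hG b)
    simpa [switch_apply_of_ne_of_ne hbj hbz] using card_in_of_mem_Dreg hG b

theorem switch_mem_Dcond {v w j z : Fin n} {S : Finset (Fin n)} {F : Finset (Fin n × Fin n)}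
    (hG : G ∈ Dcond n d S F) (hvw : v ≠ w) (hjz : j ≠ z) (hj : j ∉ S) (hz : z ∉ S)
    (hvj : G v j = true) (hwz : G w z = true) (hwj : G w j = false) (hvz : G v z = false) :
    switch G v w j z ∈ Dcond n d S F := by
  obtain ⟨hreg, hF⟩ := mem_filter.1 hG
  refine mem_filter.2 ⟨switch_mem_Dreg hreg hvw hjz hvj hwz hwj hvz, hF ▸ filter_congr ?_⟩
  rintro ⟨a, b⟩ -
  by_cases hb : b ∈ S
  · simp [hb, switch_apply_of_ne_of_ne (ne_of_mem_of_not_mem hb hj)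
      (ne_of_mem_of_not_mem hb hz)]
  · simp [hb]

end Regular

section SwitchingStep

variable {n d : ℕ} {G : Fin n → Fin n → Bool} {T U : Finset (Fin n)} {j : Fin n}

def IsSwitchable (T U : Finset (Fin n)) (j : Fin n) (G : Fin n → Fin n → Bool) (v w z : Fin n) :
    Prop :=
  v ∈ T ∧ G v j = true ∧ w ∉ T ∧ G w j = false ∧ G w z = true ∧ G v z = false ∧
    z ∉ U ∧ z ≠ j

def levelGe (N : Finset (Fin n → Fin n → Bool)) (T : Finset (Fin n)) (j : Fin n) (m : ℕ) :
    Finset (Fin n → Fin n → Bool) :=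
  N.filter fun G => m ≤ #{a ∈ T | G a j = true}

/-- An edge `(w,z)` fails to complete a switching at `v` only if `w ∈ T ∪ N⁻(j)` or
`z ∈ N⁺(v) ∪ U ∪ {j}`, and each of these vertex sets carries few edges. -/
theorem card_isSwitchable_ge (hG : G ∈ Dreg n d) {v : Fin n} (hv : v ∈ T) (hvj : G v j = true) :
    n * d - (#T + d + (d + #U + 1)) * d ≤
      #{p : Fin n × Fin n | IsSwitchable T U j G v p.1 p.2} := by
  set A : Finset (Fin n) := T ∪ ({a | G a j = true} : Finset (Fin n))
  set B : Finset (Fin n) := ({b | G v b = true} : Finset (Fin n)) ∪ U ∪ {j}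
  have hcover : #{p : Fin n × Fin n | G p.1 p.2 = true} ≤
      #{p : Fin n × Fin n | IsSwitchable T U j G v p.1 p.2} +
        #{p : Fin n × Fin n | G p.1 p.2 = true ∧ p.1 ∈ A} +
        #{p : Fin n × Fin n | G p.1 p.2 = true ∧ p.2 ∈ B} := by
    refine (card_le_card fun p hp => ?_).trans
      ((card_union_le _ _).trans (Nat.add_le_add_right (card_union_le _ _) _))
    simp only [mem_filter, mem_univ, true_and, mem_union, A, B, mem_singleton] at hp ⊢
    simp only [IsSwitchable, ← Bool.not_eq_true]
    tauto
  have hA : #A ≤ #T + d := (card_union_le _ _).trans_eq (by rw [card_in_of_mem_Dreg hG])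
  have hB : #B ≤ d + #U + 1 := (card_union_le _ _).trans (Nat.add_le_add_right
    ((card_union_le _ _).trans_eq (by rw [card_out_of_mem_Dreg hG])) _)
  have htotal : #{p : Fin n × Fin n | G p.1 p.2 = true} = n * d := by
    simpa using card_inEdges_of_mem_Dreg hG univ
  rw [htotal, card_outEdges_of_mem_Dreg hG, card_inEdges_of_mem_Dreg hG] at hcover
  rw [Nat.sub_le_iff_le_add]
  nlinarith [Nat.mul_le_mul_right d hA, Nat.mul_le_mul_right d hB]

theorem card_isSwitchable_triples_ge (hG : G ∈ Dreg n d) {m : ℕ}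
    (hm : m ≤ #{a ∈ T | G a j = true}) :
    m * (n * d - (#T + d + (d + #U + 1)) * d) ≤
      #{t : Fin n × (Fin n × Fin n) | IsSwitchable T U j G t.1 t.2.1 t.2.2} := by
  calc m * (n * d - (#T + d + (d + #U + 1)) * d)
      ≤ #{a ∈ T | G a j = true} * (n * d - (#T + d + (d + #U + 1)) * d) :=
        Nat.mul_le_mul_right _ hm
    _ ≤ ∑ v ∈ {a ∈ T | G a j = true},
          #{p : Fin n × Fin n | IsSwitchable T U j G v p.1 p.2} := by
        rw [← smul_eq_mul]
        exact card_nsmul_le_sum _ _ _ fun v hv =>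
          card_isSwitchable_ge hG (mem_filter.1 hv).1 (mem_filter.1 hv).2
    _ ≤ ∑ v, #{p : Fin n × Fin n | IsSwitchable T U j G v p.1 p.2} :=
        sum_le_sum_of_subset (subset_univ _)
    _ = _ := (card_filter_prod_eq_sum
          fun t : Fin n × (Fin n × Fin n) => IsSwitchable T U j G t.1 t.2.1 t.2.2).symm

theorem card_reverse_switchings (hG : G ∈ Dreg n d) (T : Finset (Fin n)) (j : Fin n) :
    #{t : Fin n × (Fin n × Fin n) | (G t.2.1 j = true ∧ G t.1 t.2.2 = true) ∧ t.1 ∈ T} =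
      #T * (d * d) := by
  rw [card_filter_and_fst_mem
    fun (v : Fin n) (p : Fin n × Fin n) => G p.1 j = true ∧ G v p.2 = true]
  refine (sum_congr rfl fun v _ => ?_).trans (by rw [sum_const, smul_eq_mul])
  rw [← univ_product_univ, filter_product (fun w => G w j = true) (fun z => G v z = true),
    card_product, card_in_of_mem_Dreg hG, card_out_of_mem_Dreg hG]

theorem filter_switch_eq_erase {v w z : Fin n} (hw : w ∉ T) (hjz : j ≠ z) :
    {a ∈ T | switch G v w j z a j = true} = {a ∈ T | G a j = true}.erase v := by
  ext a
  by_cases hav : a = v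
  · simp [hav, switch]
  by_cases haw : a = w
  · simp [haw, hw]
  · simp [switch, hav, haw, hjz]

theorem switch_mem_levelGe {S I : Finset (Fin n)} {F H : Finset (Fin n × Fin n)} {m : ℕ}
    {v w z : Fin n} (hj : j ∉ S ∪ I)
    (hG : G ∈ levelGe (Dcond n d S F ∩ Dcond n d I H) T j (m + 1))
    (hsw : IsSwitchable T (S ∪ I) j G v w z) :
    switch G v w j z ∈ levelGe (Dcond n d S F ∩ Dcond n d I H) T j m := by
  obtain ⟨hv, hvj, hw, hwj, hwz, hvz, hz, hzj⟩ := hsw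
  obtain ⟨hN, hcount⟩ := mem_filter.1 hG
  obtain ⟨hGS, hGI⟩ := mem_inter.1 hN
  have hvw : v ≠ w := ne_of_mem_of_not_mem hv hw
  rw [notMem_union] at hj hz
  refine mem_filter.2 ⟨mem_inter.2 ⟨?_, ?_⟩, ?_⟩
  · exact switch_mem_Dcond hGS hvw hzj.symm hj.1 hz.1 hvj hwz hwj hvz
  · exact switch_mem_Dcond hGI hvw hzj.symm hj.2 hz.2 hvj hwz hwj hvz
  · rw [filter_switch_eq_erase hw hzj.symm, card_erase_of_mem (mem_filter.2 ⟨hv, hvj⟩)]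
    omega

theorem card_levelGe_succ_mul_le {S I : Finset (Fin n)} {F H : Finset (Fin n × Fin n)}
    (hj : j ∉ S ∪ I) (m : ℕ) :
    #(levelGe (Dcond n d S F ∩ Dcond n d I H) T j (m + 1)) *
        ((m + 1) * (n * d - (#T + d + (d + #(S ∪ I) + 1)) * d)) ≤
      #(levelGe (Dcond n d S F ∩ Dcond n d I H) T j m) * (#T * (d * d)) := by
  have hreg : ∀ {m G}, G ∈ levelGe (Dcond n d S F ∩ Dcond n d I H) T j m → G ∈ Dreg n d :=
    fun hG => (mem_filter.1 (mem_inter.1 (mem_filter.1 hG).1).1).1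
  refine card_mul_le_card_mul_of_switching
    (P := fun G (t : Fin n × (Fin n × Fin n)) => IsSwitchable T (S ∪ I) j G t.1 t.2.1 t.2.2)
    (Q := fun G (t : Fin n × (Fin n × Fin n)) =>
      (G t.2.1 j = true ∧ G t.1 t.2.2 = true) ∧ t.1 ∈ T)
    (f := fun G (t : Fin n × (Fin n × Fin n)) => switch G t.1 t.2.1 j t.2.2)
    (fun G hG => card_isSwitchable_triples_ge (hreg hG) (mem_filter.1 hG).2)
    (fun G hG => (card_reverse_switchings (hreg hG) T j).le) ?_ ?_
  · rintro G hG ⟨v, w, z⟩ hsw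
    refine ⟨switch_mem_levelGe hj hG hsw, ?_, hsw.1⟩
    obtain ⟨hv, -, hw, -, -, -, -, hzj⟩ := hsw
    have hvw : v ≠ w := ne_of_mem_of_not_mem hv hw
    exact ⟨switch_apply_wj hvw hzj.symm, switch_apply_vz hvw hzj.symm⟩
  · rintro ⟨v, w, z⟩ G₁ ⟨-, -, hvj₁, -, hwj₁, hwz₁, hvz₁, -, -⟩
      G₂ ⟨-, -, hvj₂, -, hwj₂, hwz₂, hvz₂, -, -⟩ h
    rw [← switch_switch hvj₁ hwz₁ hwj₁ hvz₁,
      ← switch_switch hvj₂ hwz₂ hwj₂ hvz₂]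
    exact congrArg (switch · w v j z) h

end SwitchingStep

section Arithmetic

open Real

theorem card_le_rpow_mul_of_mul_factorial_le {A B K Y m : ℕ} {a : ℝ} (hY : 0 < Y) (ha : 0 < a)
    (ham : a ≤ m) (h : A * (m ! * Y ^ m) ≤ B * K ^ m) (hle : (K / Y : ℝ) * exp 1 / a ≤ 1) :
    (A : ℝ) ≤ ((K / Y : ℝ) * exp 1 / a) ^ a * B := by
  calc (A : ℝ) ≤ (K / Y : ℝ) ^ m / m ! * B := by
        rw [div_pow, div_div, div_mul_eq_mul_div, le_div_iff₀ (by positivity)]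
        exact_mod_cast (by linarith [h] : A * (Y ^ m * m !) ≤ K ^ m * B)
    _ ≤ ((K / Y : ℝ) * exp 1 / a) ^ a * B := by
        gcongr
        exact pow_div_factorial_le_rpow (by positivity) ha ham hle

theorem four_exp_mul_le_of_le_div {n d k : ℕ} {δ : ℝ} (hd : 0 < d)
    (hk : (k : ℝ) ≤ δ * n / (4 * exp 1 * d)) : 4 * exp 1 * k * d ≤ δ * n := by
  rw [le_div_iff₀ (by positivity)] at hk
  linarith

theorem lt_of_four_exp_mul_le {n d k : ℕ} {δ : ℝ} (hδ1 : δ < 1) (hd2 : 2 ≤ d)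
    (hdn : (d : ℝ) ≤ n / 12) (hkd : 4 * exp 1 * k * d ≤ δ * n) : k < n := by
  have he : (2.7 : ℝ) ≤ exp 1 := exp_one_gt_d9.le.trans' (by norm_num)
  have hd : (2 : ℝ) ≤ d := by exact_mod_cast hd2
  have hn : (0 : ℝ) < n := by linarith
  have hed : (21 : ℝ) ≤ 4 * exp 1 * d := by nlinarith
  have hk : (21 : ℝ) * k ≤ δ * n := by nlinarith [k.cast_nonneg (α := ℝ)]
  exact_mod_cast (by nlinarith : (k : ℝ) < n)

theorem two_mul_badEdges_le {n d k i t u : ℕ} {δ : ℝ} (hδ1 : δ < 1) (hd2 : 2 ≤ d)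
    (hdn : (d : ℝ) ≤ n / 12) (hkd : 4 * exp 1 * k * d ≤ δ * n) (hi : (i : ℝ) ≤ n / 8)
    (ht : t ≤ k * d) (hu : u ≤ k + i) :
    2 * ((t + d + (d + u + 1)) * d) ≤ n * d := by
  have he : (2.7 : ℝ) ≤ exp 1 := exp_one_gt_d9.le.trans' (by norm_num)
  have hd : (2 : ℝ) ≤ d := by exact_mod_cast hd2
  have hvert : 2 * ((t : ℝ) + d + (d + u + 1)) ≤ n := by
    have ht' : (t : ℝ) ≤ k * d := by exact_mod_cast ht
    have hu' : (u : ℝ) ≤ k + i := by exact_mod_cast hu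
    nlinarith
  have : 2 * (t + d + (d + u + 1)) ≤ n := by exact_mod_cast hvert
  nlinarith

theorem switching_ratio_le {n d k t Y : ℕ} {δ : ℝ} (hδ : 0 < δ) (hn : 0 < n) (hd : 0 < d)
    (ht : t ≤ k * d) (hY : n * d ≤ 2 * Y) :
    ((t * (d * d) : ℕ) / Y : ℝ) * exp 1 / (δ * d) ≤ 2 * exp 1 * k * d / (δ * n) := by
  have hY' : (n : ℝ) * d ≤ 2 * Y := by exact_mod_cast hY
  have ht' : (t : ℝ) ≤ k * d := by exact_mod_cast ht
  have hn' : (0 : ℝ) < n := by exact_mod_cast hn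
  have hd' : (0 : ℝ) < d := by exact_mod_cast hd
  have hYpos : (0 : ℝ) < Y := by nlinarith
  rw [div_mul_eq_mul_div, div_div, div_le_div_iff₀ (by positivity) (by positivity)]
  push_cast
  have he := exp_pos 1
  nlinarith [mul_le_mul_of_nonneg_left hY' (by positivity : 0 ≤ 2 * exp 1 * k * d * δ * d),
    mul_le_mul_of_nonneg_left ht' (by positivity : 0 ≤ d * d * exp 1 * (δ * n))]

end Arithmetic

section Conditioning

variable {n d : ℕ} {S : Finset (Fin n)} {F : Finset (Fin n × Fin n)}
  {G : Fin n → Fin n → Bool}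

theorem mem_image_fst_iff_of_mem_Dcond (hG : G ∈ Dcond n d S F) {a : Fin n} :
    a ∈ F.image Prod.fst ↔ ∃ i ∈ S, G a i = true := by
  obtain ⟨-, rfl⟩ := mem_filter.1 hG
  simp [and_comm]

theorem card_image_fst_le_of_mem_Dcond (hG : G ∈ Dcond n d S F) :
    #(F.image Prod.fst) ≤ #S * d := by
  obtain ⟨hreg, rfl⟩ := mem_filter.1 hG
  exact card_image_le.trans_eq (card_inEdges_of_mem_Dreg hreg S)

theorem levelGe_zero (N : Finset (Fin n → Fin n → Bool)) (T : Finset (Fin n)) (j : Fin n) :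
    levelGe N T j 0 = N :=
  filter_true_of_mem fun _ _ => Nat.zero_le _

theorem card_seg_le (n k : ℕ) : #(seg n k) ≤ k :=
  Fin.card_filter_val_lt.trans_le (min_le_right _ _)

theorem mk_notMem_seg_union {k : ℕ} (hk : k < n) {I : Finset (Fin n)}
    (hI : ∀ i ∈ I, k < (i : ℕ)) : (⟨k, hk⟩ : Fin n) ∉ seg n k ∪ I := by
  simp only [mem_union, seg, mem_filter, mem_univ, true_and, lt_irrefl, false_or]
  exact fun h => (hI _ h).false

/-- Given the in-edges `F` of `[k]`, the common in-neighbours of the vertex `k` with `[k]` are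
its in-neighbours in the fixed set `F.image Prod.fst`. -/
theorem GammaSet_inter_subset_levelGe {k : ℕ} {I : Finset (Fin n)} {H : Finset (Fin n × Fin n)}
    {δ : ℝ} (hk : k < n) :
    GammaSet n d δ (seg n k) {j | (j : ℕ) = k} ∩ Dcond n d (seg n k) F ∩ Dcond n d I H ⊆
      levelGe (Dcond n d (seg n k) F ∩ Dcond n d I H) (F.image Prod.fst) ⟨k, hk⟩
        ⌈δ * d⌉₊ := by
  intro G hG
  rw [mem_inter, mem_inter] at hG
  obtain ⟨⟨hΓ, hGS⟩, hGI⟩ := hG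
  refine mem_filter.2 ⟨mem_inter.2 ⟨hGS, hGI⟩, Nat.ceil_le.2 ?_⟩
  have hcommon :
      ({v | ∃ i ∈ seg n k, i < ⟨k, hk⟩ ∧ G v i = true ∧ G v ⟨k, hk⟩ = true} : Finset _) =
        {a ∈ F.image Prod.fst | G a ⟨k, hk⟩ = true} := by
    ext a
    simp only [mem_filter, mem_univ, true_and, mem_image_fst_iff_of_mem_Dcond hGS, seg,
      Fin.lt_def]
    grind
  simpa [hcommon] using (mem_filter.1 hΓ).2 ⟨k, hk⟩ (by simp)

end Conditioning

theorem lem2_graph_sparse_general (n d k : ℕ) (δ : ℝ) (F H : Finset (Fin n × Fin n))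
    (I : Finset (Fin n))
    (hδ0 : 0 < δ) (hδ1 : δ < 1)
    (hd2 : 2 ≤ d) (hdn : (d : ℝ) ≤ n / 12)
    (hk : (k : ℝ) ≤ δ * n / (4 * Real.exp 1 * d))
    (hI : ∀ i ∈ I, k + d ≤ (i : ℕ))
    (hIcard : (I.card : ℝ) ≤ n / 8) :
    ((GammaSet n d δ (seg n k) (Finset.univ.filter fun j : Fin n => (j : ℕ) = k) ∩
        Dcond n d (seg n k) F ∩ Dcond n d I H).card : ℝ)
      ≤ (2 * Real.exp 1 * k * d / (δ * n)) ^ (δ * d) *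
        ((Dcond n d (seg n k) F ∩ Dcond n d I H).card : ℝ) := by
  obtain hN | ⟨G₀, hG₀⟩ := (Dcond n d (seg n k) F ∩ Dcond n d I H).eq_empty_or_nonempty
  · simp [inter_assoc, hN]
  set N := Dcond n d (seg n k) F ∩ Dcond n d I H
  set T := F.image Prod.fst
  have hT : #T ≤ k * d := (card_image_fst_le_of_mem_Dcond (mem_inter.1 hG₀).1).trans
    (Nat.mul_le_mul_right d (card_seg_le n k))
  have hkd := four_exp_mul_le_of_le_div (by omega) hk
  have hX := two_mul_badEdges_le hδ1 hd2 hdn hkd hIcard hT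
    ((card_union_le _ _).trans (Nat.add_le_add_right (card_seg_le n k) _))
  have hkn := lt_of_four_exp_mul_le hδ1 hd2 hdn hkd
  have hnd : 0 < n * d := Nat.mul_pos (by omega) (by omega)
  have hj := mk_notMem_seg_union hkn fun i hi => by have := hI i hi; omega
  set L := levelGe N T ⟨k, hkn⟩
  have hrec := factorial_mul_pow_mul_le_mul_pow (a := fun m => #(L m))
    (card_levelGe_succ_mul_le (F := F) (H := H) (T := T) hj) ⌈δ * d⌉₊
  simp only [L, levelGe_zero] at hrec
  have hratio := switching_ratio_le (n := n) (d := d)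
    (Y := n * d - (#T + d + (d + #(seg n k ∪ I) + 1)) * d) hδ0 (by omega) (by omega) hT
    (by omega)
  have hq : 2 * Real.exp 1 * k * d / (δ * n) ≤ 1 :=
    div_le_one_of_le₀ (by nlinarith [Real.exp_pos 1]) (by positivity)
  calc _ ≤ (#(L ⌈δ * d⌉₊) : ℝ) := by
        exact_mod_cast card_le_card (GammaSet_inter_subset_levelGe hkn)
    _ ≤ _ := card_le_rpow_mul_of_mul_factorial_le (by omega) (by positivity) (Nat.le_ceil _) hrec
          (hratio.trans hq)
    _ ≤ _ := by gcongr ?_ ^ _ * _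

/-- Lemma 2.3 of the paper: conditioned on frozen in-edges of `[k]` and of `I`, the
proportion of graphs in which the vertex `k+1` has at least `δ d` common in-neighbors
with `[k]` is at most `γ_k = (2ekd/(δn))^{δd}`. -/
theorem lem2_graph_sparse (n d k : ℕ) (δ : ℝ) (F H : Finset (Fin n × Fin n))
    (I : Finset (Fin n))
    (hδ0 : 0 < δ) (hδ1 : δ < 1)
    (hd2 : 2 ≤ d) (hdn : (d : ℝ) ≤ n / 12)
    (hk1 : 1 ≤ k) (hk : (k : ℝ) ≤ δ * n / (4 * Real.exp 1 * d))
    (hI : ∀ i ∈ I, k + d ≤ (i : ℕ))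
    (hIcard : (I.card : ℝ) ≤ n / 8) :
    ((GammaSet n d δ (seg n k) (Finset.univ.filter fun j : Fin n => (j : ℕ) = k) ∩
        Dcond n d (seg n k) F ∩ Dcond n d I H).card : ℝ)
      ≤ (2 * Real.exp 1 * k * d / (δ * n)) ^ (δ * d) *
        ((Dcond n d (seg n k) F ∩ Dcond n d I H).card : ℝ) :=
  lem2_graph_sparse_general n d k δ F H I hδ0 hδ1 hd2 hdn hk hI hIcard
end

section
/- Let ε ∈ (0,1) and 8 ≤ d ≤ ε·n/6. Define Ω²_ε = {M ∈ M_{n,d} : for all distinct i, j ∈ [n], |supp(R_i + R_j)| ≥ 2(1−ε)d}, where R_i denotes the i-th row of M. Then P(Ω²_ε) ≥ 1 − (n²/2)·(ed/(εn))^{εd}. -/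
/-!
A pair of rows violates the bound exactly when their supports share at least `m = ⌈2εd⌉`
columns. Fix rows `i ≠ j` and an `m`-set `S`, and let `C(T)` be the set of matrices whose row `i`
contains `S` and whose row `j` contains `T ⊆ S`. Switchings (exchanging the entries of two
columns in two rows) that move a one of row `j` out of a column `s ∈ S \ T` give
`|C(T ∪ {s})| (n - d) ≤ 2d |C(T)|`, hence `|C(S)| (n - d)^m ≤ (2d)^m |C(∅)|`. Every matrix lies in
`C(d, m)` of the sets `C(∅)`, so a fixed pair of rows is bad with probability at most
`C(d, m) (2d / (n - d))^m ≤ (ed / (εn))^(εd)`, and a union bound over the `n(n-1)/2` pairs ends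
the proof.
-/

open Finset
open scoped Classical

/-- `Mnd n d` is the set of `n × n` matrices with `0/1` entries (encoded as `Bool`)
such that every row and every column contains exactly `d` ones. -/
def Mnd (n d : ℕ) : Finset (Fin n → Fin n → Bool) :=
  Finset.univ.filter fun M =>
    (∀ i, (Finset.univ.filter fun j => M i j = true).card = d) ∧
    (∀ j, (Finset.univ.filter fun i => M i j = true).card = d)

/-- The real `0/1` matrix associated to a Bool matrix. -/
def toRealM {n : ℕ} (M : Fin n → Fin n → Bool) : Matrix (Fin n) (Fin n) ℝ :=
  Matrix.of fun i j => if M i j then (1 : ℝ) else 0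

open Real

lemma Finset.one_sub_le_card_filter_div {α : Type*} {s : Finset α} {p : α → Prop}
    [DecidablePred p] {x : ℝ} (hs : s.Nonempty) (h : (#{a ∈ s | ¬ p a} : ℝ) ≤ x * #s) :
    1 - x ≤ #{a ∈ s | p a} / #s := by
  have hs' : (0 : ℝ) < #s := Nat.cast_pos.mpr hs.card_pos
  have hsum : (#{a ∈ s | p a} : ℝ) + #{a ∈ s | ¬ p a} = #s := by
    exact_mod_cast card_filter_add_card_filter_not p
  rw [le_div_iff₀ hs']
  linarith

lemma Nat.choose_le_exp_mul_div_pow (d m : ℕ) : (d.choose m : ℝ) ≤ (exp 1 * d / m) ^ m := by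
  rcases Nat.eq_zero_or_pos m with rfl | hm
  · simp
  have hm' : (0 : ℝ) < m := Nat.cast_pos.mpr hm
  calc (d.choose m : ℝ) ≤ d ^ m / m.factorial := Nat.choose_le_pow_div m d
    _ = (d / m) ^ m * ((m : ℝ) ^ m / m.factorial) := by
        rw [div_pow]; field_simp
    _ ≤ (d / m) ^ m * exp m := by gcongr; exact pow_div_factorial_le_exp _ hm'.le m
    _ = (exp 1 * d / m) ^ m := by
        rw [← exp_one_pow, mul_div_assoc, mul_pow, mul_comm]

lemma choose_mul_pow_le_rpow {n d m : ℕ} {ε : ℝ} (hε0 : 0 < ε) (hε1 : ε < 1) (hd : 0 < d)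
    (hdn : (d : ℝ) ≤ ε * n / 6) (hm : 2 * ε * d ≤ m) :
    (d.choose m : ℝ) * (2 * d / (n - d)) ^ m ≤ (exp 1 * d / (ε * n)) ^ (ε * d) := by
  have hd' : (0 : ℝ) < d := Nat.cast_pos.mpr hd
  have hn : (0 : ℝ) < n := by nlinarith
  have hnd : 6 * (d : ℝ) ≤ n := by nlinarith
  have hm' : (0 : ℝ) < m := by nlinarith
  have hnd' : (0 : ℝ) < n - d := by linarith
  set c := exp 1 * d / (ε * n)
  have hc : c ≤ exp 1 / 6 := by
    rw [div_le_div_iff₀ (by positivity) (by norm_num)]; nlinarith [exp_pos 1]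
  have hc0 : 0 < c := by positivity
  have he := exp_one_lt_d9
  -- `6d ≤ n` gives `2d/(n-d) ≤ 12d/(5n)`, and `c ≤ e/6` gives `6c/5 ≤ 1` and `(6c/5)² ≤ c`.
  have hq : exp 1 * d / m * (2 * d / (n - d)) ≤ 6 / 5 * c := by
    have h₁ : exp 1 * d / m ≤ exp 1 / (2 * ε) := by
      rw [div_le_div_iff₀ hm' (by positivity)]; nlinarith [exp_pos 1]
    have h₂ : (2 * d / (n - d) : ℝ) ≤ 12 * d / (5 * n) := by
      rw [div_le_div_iff₀ (by linarith) (by positivity)]; nlinarith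
    calc exp 1 * d / m * (2 * d / (n - d)) ≤ exp 1 / (2 * ε) * (12 * d / (5 * n)) :=
          mul_le_mul h₁ h₂ (by positivity) (by positivity)
      _ = 6 / 5 * c := by simp only [c]; field_simp; ring
  calc (d.choose m : ℝ) * (2 * d / (n - d)) ^ m
      ≤ (exp 1 * d / m) ^ m * (2 * d / (n - d)) ^ m := by
        gcongr; exact Nat.choose_le_exp_mul_div_pow d m
    _ ≤ (6 / 5 * c) ^ m := by
        rw [← mul_pow]; gcongr
    _ = (6 / 5 * c) ^ (m : ℝ) := (rpow_natCast _ _).symm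
    _ ≤ (6 / 5 * c) ^ (2 * (ε * d)) :=
        rpow_le_rpow_of_exponent_ge (by positivity) (by linarith) (by linarith)
    _ = ((6 / 5 * c) ^ 2) ^ (ε * d) := by
        rw [rpow_mul (by positivity)]; norm_cast
    _ ≤ c ^ (ε * d) := by gcongr; nlinarith

namespace Mnd

variable {n d : ℕ} {M : Fin n → Fin n → Bool} {i j : Fin n} {ε : ℝ}

def rowSupp (M : Fin n → Fin n → Bool) (i : Fin n) : Finset (Fin n) := {k | M i k = true}

def colSupp (M : Fin n → Fin n → Bool) (k : Fin n) : Finset (Fin n) := {i | M i k = true}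

@[simp] lemma mem_rowSupp {k : Fin n} : k ∈ rowSupp M i ↔ M i k = true := by simp [rowSupp]

@[simp] lemma mem_colSupp {k : Fin n} : i ∈ colSupp M k ↔ M i k = true := by simp [colSupp]

lemma mem_iff :
    M ∈ Mnd n d ↔ (∀ i, #(rowSupp M i) = d) ∧ ∀ k, #(colSupp M k) = d := by
  simp [Mnd, rowSupp, colSupp]

lemma nonempty (h : d ≤ n) : (Mnd n d).Nonempty := by
  rcases Nat.eq_zero_or_pos n with rfl | hn
  · exact ⟨fun i => i.elim0, mem_iff.mpr ⟨fun i => i.elim0, fun k => k.elim0⟩⟩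
  have : NeZero n := ⟨hn.ne'⟩
  have hcard : #{x : Fin n | x.val < d} = d := by rw [Fin.card_filter_val_lt, min_eq_right h]
  refine ⟨fun i j => decide ((j - i).val < d), mem_iff.mpr ⟨fun i => ?_, fun j => ?_⟩⟩
  · exact (card_equiv (Equiv.subRight i) fun j => by simp).trans hcard
  · exact (card_equiv (Equiv.subLeft j) fun i => by simp).trans hcard

def switch (M : Fin n → Fin n → Bool) (a b s t : Fin n) : Fin n → Fin n → Bool :=
  fun x y => if x = a ∨ x = b then M x (Equiv.swap s t y) else M x y

section Switch

variable {a b s t : Fin n}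

lemma switch_apply_of_ne {x : Fin n} (hxa : x ≠ a) (hxb : x ≠ b) :
    switch M a b s t x = M x := by
  funext y; simp [switch, hxa, hxb]

@[simp] lemma switch_switch (M : Fin n → Fin n → Bool) (a b s t : Fin n) :
    switch (switch M a b s t) a b s t = M := by
  funext x y; by_cases hx : x = a ∨ x = b <;> simp [switch, hx]

lemma switch_injective (a b s t : Fin n) : Function.Injective fun M => switch M a b s t :=
  Function.LeftInverse.injective (g := fun M => switch M a b s t) (switch_switch · a b s t)

lemma card_rowSupp_switch (x : Fin n) : #(rowSupp (switch M a b s t) x) = #(rowSupp M x) := by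
  by_cases hx : x = a ∨ x = b
  · exact card_equiv (Equiv.swap s t) fun y => by simp [switch, hx]
  · push Not at hx; simp only [rowSupp, switch_apply_of_ne hx.1 hx.2]

lemma card_colSupp_switch (h₁ : M a s = M b t) (h₂ : M a t = M b s) (y : Fin n) :
    #(colSupp (switch M a b s t) y) = #(colSupp M y) := by
  by_cases hy : y = s ∨ y = t
  · refine card_equiv (Equiv.swap a b) fun x => ?_
    by_cases hxa : x = a <;> by_cases hxb : x = b <;> rcases hy with rfl | rfl <;>
      simp_all [switch, Equiv.swap_apply_of_ne_of_ne]
  · push Not at hy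
    congr 1; ext x; simp [switch, Equiv.swap_apply_of_ne_of_ne hy.1 hy.2]

lemma switch_mem (hM : M ∈ Mnd n d) (h₁ : M a s = M b t) (h₂ : M a t = M b s) :
    switch M a b s t ∈ Mnd n d := by
  obtain ⟨hrow, hcol⟩ := mem_iff.mp hM
  exact mem_iff.mpr ⟨fun x => (card_rowSupp_switch x).trans (hrow x),
    fun y => (card_colSupp_switch h₁ h₂ y).trans (hcol y)⟩

end Switch

lemma sum_card_rowSupp_inter (hM : M ∈ Mnd n d) (K : Finset (Fin n)) :
    ∑ i, #(rowSupp M i ∩ K) = #K * d := by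
  calc ∑ i, #(rowSupp M i ∩ K) = ∑ i, ∑ k ∈ K, if M i k = true then 1 else 0 := by
        refine sum_congr rfl fun i _ => ?_
        rw [inter_comm, ← filter_mem_eq_inter, card_filter]
        simp
    _ = ∑ k ∈ K, #(colSupp M k) := by
        rw [sum_comm]
        exact sum_congr rfl fun k _ => by rw [colSupp, card_filter]
    _ = #K * d := by rw [sum_congr rfl fun k _ => (mem_iff.mp hM).2 k, sum_const, smul_eq_mul]

def forwardSwitchings (M : Fin n → Fin n → Bool) (j s : Fin n) :
    Finset (Σ _ : Fin n, Fin n) :=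
  (colSupp M s)ᶜ.sigma fun i => rowSupp M i \ rowSupp M j

def backwardSwitchings (M : Fin n → Fin n → Bool) (j s : Fin n) :
    Finset (Σ _ : Fin n, Fin n) :=
  (colSupp M s).sigma fun _ => rowSupp M j

@[simp] lemma mem_forwardSwitchings {s : Fin n} {x : Σ _ : Fin n, Fin n} :
    x ∈ forwardSwitchings M j s ↔ M x.1 s = false ∧ M x.1 x.2 = true ∧ M j x.2 = false := by
  simp [forwardSwitchings]

lemma sub_mul_le_card_forwardSwitchings_add (hM : M ∈ Mnd n d) (j s : Fin n) :
    (n - d) * d ≤ #(forwardSwitchings M j s) + d * d := by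
  obtain ⟨hrow, hcol⟩ := mem_iff.mp hM
  calc (n - d) * d = ∑ i ∈ (colSupp M s)ᶜ, #(rowSupp M i) := by
        rw [sum_congr rfl fun i _ => hrow i, sum_const, card_compl, hcol, Fintype.card_fin,
          smul_eq_mul]
    _ = #(forwardSwitchings M j s) +
          ∑ i ∈ (colSupp M s)ᶜ, #(rowSupp M i ∩ rowSupp M j) := by
        simp only [forwardSwitchings, card_sigma, ← sum_add_distrib, card_sdiff_add_card_inter]
    _ ≤ #(forwardSwitchings M j s) + ∑ i, #(rowSupp M i ∩ rowSupp M j) := by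
        gcongr; exact subset_univ _
    _ = #(forwardSwitchings M j s) + d * d := by rw [sum_card_rowSupp_inter hM, hrow]

lemma card_backwardSwitchings (hM : M ∈ Mnd n d) (j s : Fin n) :
    #(backwardSwitchings M j s) = d * d := by
  obtain ⟨hrow, hcol⟩ := mem_iff.mp hM
  simp [backwardSwitchings, card_sigma, hrow, hcol]

def containing (n d : ℕ) (i j : Fin n) (S T : Finset (Fin n)) :
    Finset (Fin n → Fin n → Bool) :=
  {M ∈ Mnd n d | S ⊆ rowSupp M i ∧ T ⊆ rowSupp M j}

lemma containing_subset (i j : Fin n) (S T : Finset (Fin n)) :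
    containing n d i j S T ⊆ Mnd n d :=
  filter_subset _ _

section Switching

variable {s : Fin n} {S T : Finset (Fin n)}

lemma switch_mem_containing (hij : i ≠ j) (hsS : s ∈ S) (hsT : s ∉ T)
    (hM : M ∈ containing n d i j S (insert s T)) {x : Σ _ : Fin n, Fin n}
    (hx : x ∈ forwardSwitchings M j s) :
    switch M j x.1 s x.2 ∈ containing n d i j S T := by
  obtain ⟨hMnd, hSi, hTj⟩ := mem_filter.mp hM
  obtain ⟨i', k'⟩ := x
  obtain ⟨hi's, hi'k', hjk'⟩ := mem_forwardSwitchings.mp hx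
  have hjs : M j s = true := mem_rowSupp.mp (hTj (mem_insert_self s T))
  have hii' : i ≠ i' := by
    rintro rfl; simpa [hi's] using hSi hsS
  refine mem_filter.mpr ⟨switch_mem hMnd (by rw [hjs, hi'k']) (by rw [hjk', hi's]), ?_, ?_⟩
  · rwa [rowSupp, switch_apply_of_ne hij hii']
  · intro k hk
    have hjk : M j k = true := mem_rowSupp.mp (hTj (mem_insert_of_mem hk))
    have hks : k ≠ s := by rintro rfl; exact hsT hk
    have hkk' : k ≠ k' := by rintro rfl; simp [hjk] at hjk'
    simp [switch, Equiv.swap_apply_of_ne_of_ne hks hkk', hjk]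

lemma mem_backwardSwitchings_switch (hjs : M j s = true) {x : Σ _ : Fin n, Fin n}
    (hx : x ∈ forwardSwitchings M j s) : x ∈ backwardSwitchings (switch M j x.1 s x.2) j s := by
  simp [backwardSwitchings, switch, hjs, (mem_forwardSwitchings.mp hx).2.1]

/-- Double count the switchings `M ↦ switch M j i' s k'`, which move the one of row `j` from
column `s` to a column `k'` and the one of row `i'` the other way: a matrix on the left admits
at least `(n - d) d - d²` of them, and a matrix on the right is reached by at most `d²`. -/
lemma card_containing_insert_mul_le (hd : 0 < d) (hij : i ≠ j) (hsS : s ∈ S) (hsT : s ∉ T) :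
    #(containing n d i j S (insert s T)) * (n - d) ≤ 2 * d * #(containing n d i j S T) := by
  set C₁ := containing n d i j S (insert s T)
  set C₂ := containing n d i j S T
  have hC : C₁ ⊆ C₂ := monotone_filter_right _ fun M _ h =>
    ⟨h.1, (subset_insert s T).trans h.2⟩
  set E := C₁.sigma (forwardSwitchings · j s)
  set F := C₂.sigma (backwardSwitchings · j s)
  have hforward : #C₁ * ((n - d) * d) ≤ #E + #C₁ * (d * d) := by
    have := sum_le_sum fun M (hM : M ∈ C₁) =>
      sub_mul_le_card_forwardSwitchings_add (containing_subset i j S _ hM) j s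
    simpa [E, card_sigma, sum_add_distrib] using this
  have hbackward : #F = #C₂ * (d * d) := by
    rw [card_sigma, sum_const_nat fun N (hN : N ∈ C₂) =>
      card_backwardSwitchings (containing_subset i j S T hN) j s]
  have hinj : #E ≤ #F := by
    refine card_le_card_of_injOn (fun x => ⟨switch x.1 j x.2.1 s x.2.2, x.2⟩) ?_ ?_
    · rintro ⟨M, x⟩ hMx
      obtain ⟨hM, hx⟩ := mem_sigma.mp hMx
      have hjs : M j s = true := mem_rowSupp.mp ((mem_filter.mp hM).2.2 (mem_insert_self s T))
      exact mem_sigma.mpr ⟨switch_mem_containing hij hsS hsT hM hx,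
        mem_backwardSwitchings_switch hjs hx⟩
    · rintro ⟨M, x⟩ - ⟨M', x'⟩ - h
      simp only [Sigma.mk.inj_iff, heq_eq_eq] at h
      obtain ⟨hM, rfl⟩ := h
      rw [switch_injective j x.1 s x.2 hM]
  have : #C₁ * (n - d) * d ≤ 2 * d * #C₂ * d := by
    calc #C₁ * (n - d) * d ≤ #C₂ * (d * d) + #C₁ * (d * d) := by
          rw [mul_assoc, ← hbackward]; exact hforward.trans (by gcongr)
      _ ≤ 2 * d * #C₂ * d := by nlinarith [card_le_card hC]
  exact Nat.le_of_mul_le_mul_right this hd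

end Switching

lemma card_containing_mul_pow_le (hd : 0 < d) (hij : i ≠ j) {S T : Finset (Fin n)}
    (hTS : T ⊆ S) :
    #(containing n d i j S T) * (n - d) ^ #T ≤ (2 * d) ^ #T * #(containing n d i j S ∅) := by
  induction T using Finset.induction_on with
  | empty => simp
  | @insert s T hsT ih =>
    have hsS : s ∈ S := hTS (mem_insert_self s T)
    rw [card_insert_of_notMem hsT]
    calc #(containing n d i j S (insert s T)) * (n - d) ^ (#T + 1)
        = #(containing n d i j S (insert s T)) * (n - d) * (n - d) ^ #T := by ring
      _ ≤ 2 * d * #(containing n d i j S T) * (n - d) ^ #T :=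
          Nat.mul_le_mul_right _ (card_containing_insert_mul_le hd hij hsS hsT)
      _ ≤ 2 * d * ((2 * d) ^ #T * #(containing n d i j S ∅)) := by
          rw [mul_assoc]; exact Nat.mul_le_mul_left _ (ih ((subset_insert s T).trans hTS))
      _ = (2 * d) ^ (#T + 1) * #(containing n d i j S ∅) := by ring

lemma sum_card_containing_empty (i j : Fin n) (m : ℕ) :
    ∑ S ∈ powersetCard m univ, #(containing n d i j S ∅) = d.choose m * #(Mnd n d) := by
  calc ∑ S ∈ powersetCard m univ, #(containing n d i j S ∅)
      = ∑ M ∈ Mnd n d, #{S ∈ powersetCard m univ | S ⊆ rowSupp M i} := by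
        simp only [containing, card_filter, empty_subset, and_true]
        exact sum_comm
    _ = ∑ M ∈ Mnd n d, d.choose m := by
        refine sum_congr rfl fun M hM => ?_
        rw [← (mem_iff.mp hM).1 i, ← card_powersetCard]
        congr 1; ext S; simp [mem_powersetCard]; tauto
    _ = d.choose m * #(Mnd n d) := by rw [sum_const, smul_eq_mul, mul_comm]

lemma card_le_card_inter_mul_pow_le (hd : 0 < d) (hij : i ≠ j) (m : ℕ) :
    #{M ∈ Mnd n d | m ≤ #(rowSupp M i ∩ rowSupp M j)} * (n - d) ^ m ≤
      d.choose m * (2 * d) ^ m * #(Mnd n d) := by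
  have hcover : {M ∈ Mnd n d | m ≤ #(rowSupp M i ∩ rowSupp M j)} ⊆
      (powersetCard m univ).biUnion fun S => containing n d i j S S := by
    intro M hM
    obtain ⟨hMnd, hm⟩ := mem_filter.mp hM
    obtain ⟨S, hS, rfl⟩ := exists_subset_card_eq hm
    exact mem_biUnion.mpr ⟨S, mem_powersetCard.mpr ⟨subset_univ S, rfl⟩,
      mem_filter.mpr ⟨hMnd, hS.trans inter_subset_left, hS.trans inter_subset_right⟩⟩
  calc #{M ∈ Mnd n d | m ≤ #(rowSupp M i ∩ rowSupp M j)} * (n - d) ^ m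
      ≤ (∑ S ∈ powersetCard m univ, #(containing n d i j S S)) * (n - d) ^ m := by
        gcongr; exact (card_le_card hcover).trans card_biUnion_le
    _ ≤ ∑ S ∈ powersetCard m univ, (2 * d) ^ m * #(containing n d i j S ∅) := by
        rw [sum_mul]
        refine sum_le_sum fun S hS => ?_
        obtain rfl := (mem_powersetCard.mp hS).2
        exact card_containing_mul_pow_le hd hij subset_rfl
    _ = d.choose m * (2 * d) ^ m * #(Mnd n d) := by
        rw [← mul_sum, sum_card_containing_empty]; ring

/-- The event `Ω²_ε` of the paper; reducible, so that the decidability instance of the filter in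
`prop_disjoint_rows` is found for it. -/
abbrev AlmostDisjointRows (d : ℕ) (ε : ℝ) (M : Fin n → Fin n → Bool) : Prop :=
  ∀ i j : Fin n, i ≠ j →
    2 * (1 - ε) * d ≤ (#{k | toRealM M i k + toRealM M j k ≠ 0} : ℝ)

lemma filter_toRealM_add_ne_zero (M : Fin n → Fin n → Bool) (i j : Fin n) :
    ({k | toRealM M i k + toRealM M j k ≠ 0} : Finset (Fin n)) = rowSupp M i ∪ rowSupp M j := by
  ext k
  rw [mem_filter, mem_union, mem_rowSupp, mem_rowSupp]
  cases hi : M i k <;> cases hj : M j k <;> simp [toRealM, hi, hj]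

lemma ceil_le_card_inter_of_card_union_lt (hM : M ∈ Mnd n d)
    (h : (#(rowSupp M i ∪ rowSupp M j) : ℝ) < 2 * (1 - ε) * d) :
    ⌈2 * ε * d⌉₊ ≤ #(rowSupp M i ∩ rowSupp M j) := by
  have hsum := card_union_add_card_inter (rowSupp M i) (rowSupp M j)
  rw [(mem_iff.mp hM).1 i, (mem_iff.mp hM).1 j] at hsum
  have hsum' : (#(rowSupp M i ∪ rowSupp M j) : ℝ) + #(rowSupp M i ∩ rowSupp M j) = d + d := by
    exact_mod_cast hsum
  exact Nat.ceil_le.mpr (by linarith)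

lemma card_le_card_inter_le_rpow (hε0 : 0 < ε) (hε1 : ε < 1) (hd : 0 < d)
    (hdn : (d : ℝ) ≤ ε * n / 6) (hij : i ≠ j) :
    (#{M ∈ Mnd n d | ⌈2 * ε * d⌉₊ ≤ #(rowSupp M i ∩ rowSupp M j)} : ℝ) ≤
      (exp 1 * d / (ε * n)) ^ (ε * d) * #(Mnd n d) := by
  set m := ⌈2 * ε * d⌉₊
  have hd' : (0 : ℝ) < d := Nat.cast_pos.mpr hd
  have hnd : (d : ℝ) < n := by nlinarith
  have hnd' : (0 : ℝ) < n - d := by linarith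
  have hcount : (#{M ∈ Mnd n d | m ≤ #(rowSupp M i ∩ rowSupp M j)} : ℝ) * (n - d) ^ m ≤
      d.choose m * (2 * d) ^ m * #(Mnd n d) := by
    rw [← Nat.cast_sub (by exact_mod_cast hnd.le)]
    exact_mod_cast card_le_card_inter_mul_pow_le hd hij m
  calc (#{M ∈ Mnd n d | m ≤ #(rowSupp M i ∩ rowSupp M j)} : ℝ)
      ≤ d.choose m * (2 * d) ^ m * #(Mnd n d) / (n - d) ^ m := by
        rw [le_div_iff₀ (by positivity)]; exact hcount
    _ = d.choose m * (2 * d / (n - d)) ^ m * #(Mnd n d) := by rw [div_pow]; ring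
    _ ≤ (exp 1 * d / (ε * n)) ^ (ε * d) * #(Mnd n d) := by
        gcongr; exact choose_mul_pow_le_rpow hε0 hε1 hd hdn (Nat.le_ceil _)

lemma card_not_almostDisjointRows_le (hε0 : 0 < ε) (hε1 : ε < 1) (hd : 0 < d)
    (hdn : (d : ℝ) ≤ ε * n / 6) :
    (#{M ∈ Mnd n d | ¬ AlmostDisjointRows d ε M} : ℝ) ≤
      n ^ 2 / 2 * (exp 1 * d / (ε * n)) ^ (ε * d) * #(Mnd n d) := by
  set m := ⌈2 * ε * d⌉₊
  set P : Finset (Fin n × Fin n) := {p | p.1 < p.2} with hP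
  have hcover : {M ∈ Mnd n d | ¬ AlmostDisjointRows d ε M} ⊆
      P.biUnion fun p => {M ∈ Mnd n d | m ≤ #(rowSupp M p.1 ∩ rowSupp M p.2)} := by
    intro M hM
    obtain ⟨hMnd, hbad⟩ := mem_filter.mp hM
    simp only [AlmostDisjointRows, not_forall, not_le, filter_toRealM_add_ne_zero] at hbad
    obtain ⟨i, j, hij, hlt⟩ := hbad
    rcases hij.lt_or_gt with hij | hji
    · exact mem_biUnion.mpr ⟨(i, j), by simpa [hP] using hij,
        mem_filter.mpr ⟨hMnd, ceil_le_card_inter_of_card_union_lt hMnd hlt⟩⟩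
    · rw [union_comm] at hlt
      exact mem_biUnion.mpr ⟨(j, i), by simpa [hP] using hji,
        mem_filter.mpr ⟨hMnd, ceil_le_card_inter_of_card_union_lt hMnd hlt⟩⟩
  calc (#{M ∈ Mnd n d | ¬ AlmostDisjointRows d ε M} : ℝ)
      ≤ ∑ p ∈ P, (#{M ∈ Mnd n d | m ≤ #(rowSupp M p.1 ∩ rowSupp M p.2)} : ℝ) := by
        exact_mod_cast (card_le_card hcover).trans card_biUnion_le
    _ ≤ ∑ p ∈ P, (exp 1 * d / (ε * n)) ^ (ε * d) * #(Mnd n d) :=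
        sum_le_sum fun p hp =>
          card_le_card_inter_le_rpow hε0 hε1 hd hdn (mem_filter.mp hp).2.ne
    _ = n.choose 2 * ((exp 1 * d / (ε * n)) ^ (ε * d) * #(Mnd n d)) := by
        rw [sum_const, Fintype.card_product_filter_lt, Fintype.card_fin, nsmul_eq_mul]
    _ ≤ n ^ 2 / 2 * (exp 1 * d / (ε * n)) ^ (ε * d) * #(Mnd n d) := by
        rw [Nat.cast_choose_two, ← mul_assoc]
        gcongr
        nlinarith

end Mnd

/-- Proposition 3.2 of the paper: with high probability every two distinct rows of a
random matrix from `Mnd n d` have almost disjoint supports, i.e.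
`|supp (R_i + R_j)| ≥ 2(1-ε)d`. -/
theorem prop_disjoint_rows (n d : ℕ) (ε : ℝ)
    (hε0 : 0 < ε) (hε1 : ε < 1) (hd8 : 8 ≤ d) (hdn : (d : ℝ) ≤ ε * n / 6) :
    1 - (n ^ 2 / 2) * (Real.exp 1 * d / (ε * n)) ^ (ε * d) ≤
      (((Mnd n d).filter fun M => ∀ i j : Fin n, i ≠ j →
          2 * (1 - ε) * d ≤
            ((Finset.univ.filter fun k : Fin n =>
              toRealM M i k + toRealM M j k ≠ 0).card : ℝ)).card : ℝ) /
        ((Mnd n d).card : ℝ) := by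
  have hd : 0 < d := by omega
  have hdn' : (d : ℝ) ≤ n := by nlinarith [(Nat.cast_nonneg d : (0 : ℝ) ≤ d)]
  exact one_sub_le_card_filter_div (Mnd.nonempty (by exact_mod_cast hdn'))
    (Mnd.card_not_almostDisjointRows_le hε0 hε1 hd hdn)
end

section
/- Let 1 ≤ d ≤ n and 0 < α, β < 1 with αn an integer. If a matrix M ∈ M_{n,d} does not belong to Ω⁰(α, β/2) (i.e., M has no zero submatrix on a set of at least αn rows and at least βn/2 columns), then for every J ⊆ [n] with |J| ≥ βn one has |{i ∈ [n] : |supp R_i ∩ J| ≥ β/(2α)}| ≥ (1−α)n. -/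
/-!
If fewer than `(1 - α)n` rows had at least `β/(2α)` ones in `J`, we could pick exactly `αn`
rows each with fewer ones in `J`. Together they meet at most `αn · β/(2α) = βn/2` columns of
`J`, so at least `|J| - βn/2 ≥ βn/2` columns of `J` vanish on all of them: a zero block of the
forbidden size.
-/

open Finset
open scoped Classical

theorem card_le_card_filter_forall_eq_false_add_sum {ι κ : Type*} [DecidableEq κ]
    (M : ι → κ → Bool) (I : Finset ι) (J : Finset κ) :
    #J ≤ #(J.filter fun j => ∀ i ∈ I, M i j = false) +
      ∑ i ∈ I, #(J.filter fun j => M i j = true) := by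
  have hhit : J.filter (fun j => ¬ ∀ i ∈ I, M i j = false) =
      I.biUnion fun i => J.filter fun j => M i j = true := by
    ext j
    simp only [mem_filter, mem_biUnion, not_forall, Bool.not_eq_false]
    tauto
  calc #J = #(J.filter fun j => ∀ i ∈ I, M i j = false) +
        #(J.filter fun j => ¬ ∀ i ∈ I, M i j = false) :=
        (card_filter_add_card_filter_not _).symm
    _ ≤ _ := by rw [hhit]; exact Nat.add_le_add_left card_biUnion_le _

theorem lem_graph3_general (n : ℕ) (α β : ℝ) (M : Fin n → Fin n → Bool)
    (hα0 : 0 < α)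
    (hint : ∃ m : ℕ, (m : ℝ) = α * n)
    (hno : ¬ ∃ I J : Finset (Fin n),
        α * n ≤ (I.card : ℝ) ∧ β * n / 2 ≤ (J.card : ℝ) ∧
        ∀ i ∈ I, ∀ j ∈ J, M i j = false) :
    ∀ J : Finset (Fin n), β * n ≤ (J.card : ℝ) →
      (1 - α) * n ≤
        ((Finset.univ.filter fun i : Fin n =>
          β / (2 * α) ≤ ((J.filter fun j => M i j = true).card : ℝ)).card : ℝ) := by
  intro J hJ
  by_contra! hfew
  obtain ⟨m, hm⟩ := hint
  set sparse := univ.filter fun i : Fin n =>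
    ¬ β / (2 * α) ≤ ((J.filter fun j => M i j = true).card : ℝ)
  have hsparse : m ≤ #sparse := by
    have hsplit := congrArg (Nat.cast (R := ℝ)) <|
      (card_filter_add_card_filter_not (s := univ) fun i : Fin n =>
        β / (2 * α) ≤ ((J.filter fun j => M i j = true).card : ℝ)).trans (card_fin n)
    push_cast at hsplit
    exact_mod_cast (show (m : ℝ) ≤ #sparse by linarith)
  obtain ⟨I, hIsparse, hIm⟩ := exists_subset_card_eq hsparse
  have hsum : ∑ i ∈ I, ((J.filter fun j => M i j = true).card : ℝ) ≤ β * n / 2 :=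
    calc _ ≤ #I • (β / (2 * α)) := sum_le_card_nsmul _ _ _ fun i hi =>
            le_of_lt (not_le.mp (mem_filter.mp (hIsparse hi)).2)
      _ = β * n / 2 := by rw [nsmul_eq_mul, hIm, hm]; field_simp
  have hcover : (#J : ℝ) ≤ #(J.filter fun j => ∀ i ∈ I, M i j = false) +
      ∑ i ∈ I, ((J.filter fun j => M i j = true).card : ℝ) := by
    norm_cast
    convert card_le_card_filter_forall_eq_false_add_sum M I J
  apply hno
  refine ⟨I, J.filter fun j => ∀ i ∈ I, M i j = false, by rw [hIm, hm], ?_,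
    fun i hi j hj => (mem_filter.mp hj).2 i hi⟩
  linarith

/-- Lemma 3.5 of the paper: if `M` has no zero submatrix with at least `αn` rows and
at least `βn/2` columns, then for any set `J` of at least `βn` columns, at least
`(1-α)n` rows have at least `β/(2α)` ones inside `J`. -/
theorem lem_graph3 (n d : ℕ) (α β : ℝ) (M : Fin n → Fin n → Bool)
    (hd1 : 1 ≤ d) (hdn : d ≤ n)
    (hα0 : 0 < α) (hα1 : α < 1) (hβ0 : 0 < β) (hβ1 : β < 1)
    (hint : ∃ m : ℕ, (m : ℝ) = α * n)
    (hM : M ∈ Mnd n d)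
    (hno : ¬ ∃ I J : Finset (Fin n),
        α * n ≤ (I.card : ℝ) ∧ β * n / 2 ≤ (J.card : ℝ) ∧
        ∀ i ∈ I, ∀ j ∈ J, M i j = false) :
    ∀ J : Finset (Fin n), β * n ≤ (J.card : ℝ) →
      (1 - α) * n ≤
        ((Finset.univ.filter fun i : Fin n =>
          β / (2 * α) ≤ ((J.filter fun j => M i j = true).card : ℝ)).card : ℝ) :=
  lem_graph3_general n α β M hα0 hint hno
end
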